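/- arXiv:0812.0463 — 9 statements merged into one kernel-verified Lean document; each statement's English description precedes it below -/
import Mathlib

section
/- The number of involutions of {1,...,n} avoiding the pattern 4321 equals the n-th Motzkin number. -/
/-!
Draw an involution `τ` as an arc diagram with an arc `i ⌢ τ i` for each 2-cycle. Then `τ`
contains `4321` exactly when two arcs are nested, `a < b < τ b < τ a`. Scanning left to right and
writing an up step at each arc opener, a flat step at each fixed point and a down step at each arc
closer turns `τ` into a Motzkin path, because the arcs pair openers with later closers. Without
nestings `τ` is increasing on its openers, so the `r`-th opener is joined to the `r`-th closer and
`τ` is recovered from its path. Conversely, joining the `r`-th up step of a Motzkin path to its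
`r`-th down step gives a non-nesting involution: the path stays nonnegative exactly when the
`r`-th up step comes before the `r`-th down step.
-/

def Av4321 {n : ℕ} (σ : Equiv.Perm (Fin n)) : Prop :=
  ¬ ∃ i j k l : Fin n, i < j ∧ j < k ∧ k < l ∧ σ l < σ k ∧ σ k < σ j ∧ σ j < σ i

/-- Number of Motzkin paths of length `n`: sequences of steps U=(1,1), H=(1,0), D=(1,-1)
whose partial sums stay nonnegative and whose total sum is zero. -/
noncomputable def motzkinNumber (n : ℕ) : ℕ :=
  Nat.card {f : Fin n → Fin 3 //
    (∀ k : ℕ, k ≤ n → 0 ≤ ∑ i ∈ Finset.univ.filter (fun i : Fin n => (i : ℕ) < k),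
        (![1, 0, -1] : Fin 3 → ℤ) (f i)) ∧
    (∑ i : Fin n, (![1, 0, -1] : Fin 3 → ℤ) (f i)) = 0}

open Finset Function

section ArcDiagram

variable {α : Type*} [LinearOrder α]

def HasNesting (f : α → α) : Prop :=
  ∃ a b c d, a < b ∧ b < c ∧ c < d ∧ f a = d ∧ f b = c

theorem not_hasNesting_iff_strictMonoOn {f : α → α} (hf : Injective f) :
    ¬ HasNesting f ↔ StrictMonoOn f {x | x < f x} := by
  constructor
  · intro hn a _ b hb hab
    rcases lt_trichotomy (f a) (f b) with h | h | h
    · exact h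
    · exact absurd (hf h) hab.ne
    · exact absurd ⟨a, b, f b, f a, hab, hb, h, rfl, rfl⟩ hn
  · rintro hmono ⟨a, b, c, d, hab, hbc, hcd, rfl, rfl⟩
    exact lt_asymm hcd (hmono (hab.trans (hbc.trans hcd)) hbc hab)

theorem card_filter_closers_le {f : α → α} (hf : Involutive f) {s : Finset α}
    (hs : IsLowerSet (s : Set α)) :
    #{x ∈ s | f x < x} ≤ #{x ∈ s | x < f x} := by
  refine card_le_card_of_injOn f (fun x hx => ?_) hf.injective.injOn
  simp only [coe_filter, Set.mem_ofPred_eq] at hx ⊢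
  exact ⟨hs hx.2.le hx.1, by rw [hf x]; exact hx.2⟩

/-- The steps are coded as in `motzkinNumber`: `0` up (arc opener), `1` flat (fixed point),
`2` down (arc closer). -/
def motzkinStep (f : α → α) (x : α) : Fin 3 :=
  if x < f x then 0 else if f x = x then 1 else 2

variable {f : α → α} {x : α}

theorem motzkinStep_eq_zero_iff : motzkinStep f x = 0 ↔ x < f x := by
  unfold motzkinStep; split_ifs <;> simp_all

theorem motzkinStep_eq_one_iff : motzkinStep f x = 1 ↔ f x = x := by
  unfold motzkinStep
  split_ifs with h₁ h₂
  · simp [h₁.ne']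
  · simp [h₂]
  · simp [h₂]

theorem motzkinStep_eq_two_iff : motzkinStep f x = 2 ↔ f x < x := by
  unfold motzkinStep; split_ifs with h₁ h₂ <;> simp_all [lt_asymm]
  exact lt_of_le_of_ne h₁ h₂

end ArcDiagram

namespace Finset

variable {α : Type*} [LinearOrder α] {S T : Finset α}

theorem exists_orderEmbOfFin_eq {s : Finset α} {k : ℕ} (h : #s = k) {x : α} (hx : x ∈ s) :
    ∃ r, s.orderEmbOfFin h r = x := by
  rwa [← Set.mem_range, range_orderEmbOfFin]

theorem card_filter_lt_orderEmbOfFin (s : Finset α) {k : ℕ} (h : #s = k) (r : Fin k) :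
    #{x ∈ s | x < s.orderEmbOfFin h r} = r := by
  have : {x ∈ s | x < s.orderEmbOfFin h r} = (Iio r).map (s.orderEmbOfFin h).toEmbedding := by
    ext x
    simp only [mem_filter, mem_map, mem_Iio, RelEmbedding.coe_toEmbedding]
    constructor
    · rintro ⟨hx, hlt⟩
      obtain ⟨j, rfl⟩ := exists_orderEmbOfFin_eq h hx
      exact ⟨j, (s.orderEmbOfFin h).lt_iff_lt.1 hlt, rfl⟩
    · rintro ⟨j, hj, rfl⟩
      exact ⟨orderEmbOfFin_mem s h j, (s.orderEmbOfFin h).lt_iff_lt.2 hj⟩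
  rw [this, card_map, Fin.card_Iio]

def IsBallotPair (S T : Finset α) : Prop :=
  ∀ c, #{x ∈ T | x ≤ c} ≤ #{x ∈ S | x ≤ c}

theorem IsBallotPair.orderEmbOfFin_lt (hb : IsBallotPair S T) (hST : Disjoint S T)
    (h : #T = #S) (r : Fin #S) : S.orderEmbOfFin rfl r < T.orderEmbOfFin h r := by
  set s := S.orderEmbOfFin rfl r
  set t := T.orderEmbOfFin h r
  have hsS : s ∈ S := orderEmbOfFin_mem S rfl r
  have htT : t ∈ T := orderEmbOfFin_mem T h r
  by_contra! hle
  have hlt : t < s := hle.lt_of_ne fun hts => disjoint_left.1 hST hsS (hts ▸ htT)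
  have hT : r + 1 ≤ #{x ∈ T | x ≤ t} := by
    rw [← card_filter_lt_orderEmbOfFin T h r]
    refine card_lt_card ((ssubset_iff_of_subset ?_).2 ⟨t, ?_, ?_⟩)
    · intro x; simp only [mem_filter]; exact And.imp_right le_of_lt
    · simp [htT]
    · rw [mem_filter]
      exact fun hx => lt_irrefl t hx.2
  have hS : #{x ∈ S | x ≤ t} ≤ r := by
    rw [← card_filter_lt_orderEmbOfFin S rfl r]
    refine card_le_card fun x => ?_
    simp only [mem_filter]
    exact And.imp_right (·.trans_lt hlt)
  have := hb t
  omega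

/-- Exchanges the `r`-th smallest element of `S` with the `r`-th smallest element of `T`. -/
noncomputable def orderMatching (S T : Finset α) (h : #T = #S) (x : α) : α :=
  if hS : x ∈ S then T.orderEmbOfFin h ((S.orderIsoOfFin rfl).symm ⟨x, hS⟩)
  else if hT : x ∈ T then S.orderEmbOfFin rfl ((T.orderIsoOfFin h).symm ⟨x, hT⟩)
  else x

theorem orderMatching_orderEmbOfFin_left (h : #T = #S) (r : Fin #S) :
    orderMatching S T h (S.orderEmbOfFin rfl r) = T.orderEmbOfFin h r := by
  rw [orderMatching, dif_pos (orderEmbOfFin_mem S rfl r)]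
  exact congrArg _ <|
    (OrderIso.symm_apply_eq _).2 (Subtype.ext (coe_orderIsoOfFin_apply S rfl r).symm)

theorem orderMatching_orderEmbOfFin_right (hST : Disjoint S T) (h : #T = #S) (r : Fin #S) :
    orderMatching S T h (T.orderEmbOfFin h r) = S.orderEmbOfFin rfl r := by
  have hT := orderEmbOfFin_mem T h r
  rw [orderMatching, dif_neg (disjoint_right.1 hST hT), dif_pos hT]
  exact congrArg _ <|
    (OrderIso.symm_apply_eq _).2 (Subtype.ext (coe_orderIsoOfFin_apply T h r).symm)

theorem orderMatching_of_notMem (h : #T = #S) {x : α} (hS : x ∉ S) (hT : x ∉ T) :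
    orderMatching S T h x = x := by
  rw [orderMatching, dif_neg hS, dif_neg hT]

theorem orderMatching_involutive (hST : Disjoint S T) (h : #T = #S) :
    Involutive (orderMatching S T h) := by
  intro x
  by_cases hS : x ∈ S
  · obtain ⟨r, rfl⟩ := exists_orderEmbOfFin_eq rfl hS
    rw [orderMatching_orderEmbOfFin_left, orderMatching_orderEmbOfFin_right hST]
  by_cases hT : x ∈ T
  · obtain ⟨r, rfl⟩ := exists_orderEmbOfFin_eq h hT
    rw [orderMatching_orderEmbOfFin_right hST, orderMatching_orderEmbOfFin_left]
  rw [orderMatching_of_notMem h hS hT, orderMatching_of_notMem h hS hT]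

theorem strictMonoOn_orderMatching (h : #T = #S) : StrictMonoOn (orderMatching S T h) S := by
  intro x hx y hy hxy
  obtain ⟨r, rfl⟩ := exists_orderEmbOfFin_eq rfl hx
  obtain ⟨s, rfl⟩ := exists_orderEmbOfFin_eq rfl hy
  rw [orderMatching_orderEmbOfFin_left, orderMatching_orderEmbOfFin_left]
  exact (T.orderEmbOfFin h).lt_iff_lt.2 ((S.orderEmbOfFin rfl).lt_iff_lt.1 hxy)

theorem IsBallotPair.lt_orderMatching (hb : IsBallotPair S T) (hST : Disjoint S T)
    (h : #T = #S) {x : α} (hx : x ∈ S) : x < orderMatching S T h x := by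
  obtain ⟨r, rfl⟩ := exists_orderEmbOfFin_eq rfl hx
  rw [orderMatching_orderEmbOfFin_left]
  exact hb.orderEmbOfFin_lt hST h r

theorem IsBallotPair.orderMatching_lt (hb : IsBallotPair S T) (hST : Disjoint S T)
    (h : #T = #S) {x : α} (hx : x ∈ T) : orderMatching S T h x < x := by
  obtain ⟨r, rfl⟩ := exists_orderEmbOfFin_eq h hx
  rw [orderMatching_orderEmbOfFin_right hST]
  exact hb.orderEmbOfFin_lt hST h r

theorem IsBallotPair.not_hasNesting_orderMatching (hb : IsBallotPair S T) (hST : Disjoint S T)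
    (h : #T = #S) : ¬ HasNesting (orderMatching S T h) := by
  rw [not_hasNesting_iff_strictMonoOn (orderMatching_involutive hST h).injective]
  refine (strictMonoOn_orderMatching h).mono fun x (hx : x < _) => ?_
  by_contra hS
  by_cases hT : x ∈ T
  · exact lt_asymm hx (hb.orderMatching_lt hST h hT)
  · exact hx.ne' (orderMatching_of_notMem h hS hT)

end Finset

section Fintype

variable {α : Type*} [LinearOrder α] [Fintype α] {f g : α → α}

def openers (f : α → α) : Finset α := {x | x < f x}

def closers (f : α → α) : Finset α := {x | f x < x}

theorem disjoint_openers_closers : Disjoint (openers f) (closers f) :=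
  disjoint_filter.2 fun _ _ h₁ h₂ => lt_asymm h₁ h₂

theorem card_closers_eq (hf : Involutive f) : #(closers f) = #(openers f) :=
  card_nbij' f f (fun x hx => by simpa [openers, closers, hf x] using hx)
    (fun x hx => by simpa [openers, closers, hf x] using hx)
    (fun x _ => hf x) (fun x _ => hf x)

theorem apply_orderEmbOfFin_openers (hf : Involutive f) (hn : ¬ HasNesting f)
    (r : Fin #(openers f)) :
    f ((openers f).orderEmbOfFin rfl r) = (closers f).orderEmbOfFin (card_closers_eq hf) r := by
  have hmono := (not_hasNesting_iff_strictMonoOn hf.injective).1 hn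
  have hopen (s) : (openers f).orderEmbOfFin rfl s < f ((openers f).orderEmbOfFin rfl s) := by
    simpa [openers] using orderEmbOfFin_mem (openers f) rfl s
  refine congrFun (orderEmbOfFin_unique (card_closers_eq hf)
    (f := fun s => f ((openers f).orderEmbOfFin rfl s)) (fun s => ?_) fun s t hst => ?_) r
  · simpa [closers, hf _] using hopen s
  · exact hmono (hopen s) (hopen t) (((openers f).orderEmbOfFin rfl).strictMono hst)

theorem eq_orderMatching (hf : Involutive f) (hn : ¬ HasNesting f) {S T : Finset α}
    (hS : openers f = S) (hT : closers f = T) (h : #T = #S) : f = orderMatching S T h := by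
  subst hS hT
  funext x
  rcases lt_trichotomy x (f x) with hx | hx | hx
  · obtain ⟨r, rfl⟩ := exists_orderEmbOfFin_eq rfl (by simpa [openers] : x ∈ openers f)
    rw [apply_orderEmbOfFin_openers hf hn, orderMatching_orderEmbOfFin_left]
  · have hS : x ∉ openers f := by simp [openers, hx.ge]
    have hT : x ∉ closers f := by simp [closers, hx.le]
    rw [orderMatching_of_notMem _ hS hT, ← hx]
  · have hfx : f x ∈ openers f := by simpa [openers, hf x]
    obtain ⟨r, hr⟩ := exists_orderEmbOfFin_eq rfl hfx
    have hx' : x = (closers f).orderEmbOfFin h r := by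
      rw [← apply_orderEmbOfFin_openers hf hn, hr, hf x]
    rw [hx', orderMatching_orderEmbOfFin_right disjoint_openers_closers,
      ← apply_orderEmbOfFin_openers hf hn, hf]

theorem eq_of_motzkinStep_eq (hf : Involutive f) (hg : Involutive g) (hnf : ¬ HasNesting f)
    (hng : ¬ HasNesting g) (h : motzkinStep f = motzkinStep g) : f = g := by
  have hS : openers g = openers f := by
    ext x; simp [openers, ← motzkinStep_eq_zero_iff, h]
  have hT : closers g = closers f := by
    ext x; simp [closers, ← motzkinStep_eq_two_iff, h]
  rw [eq_orderMatching hf hnf rfl rfl (card_closers_eq hf), eq_orderMatching hg hng hS hT]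

theorem exists_motzkinStep_eq (p : α → Fin 3) (h : #{x | p x = 2} = #{x | p x = 0})
    (hb : IsBallotPair {x | p x = 0} {x | p x = 2}) :
    ∃ g : α → α, Involutive g ∧ ¬ HasNesting g ∧ motzkinStep g = p := by
  have hST : Disjoint ({x | p x = 0} : Finset α) ({x | p x = 2} : Finset α) :=
    disjoint_filter.2 fun _ _ h₀ h₂ => by simp [h₀] at h₂
  refine ⟨orderMatching _ _ h, orderMatching_involutive hST h,
    hb.not_hasNesting_orderMatching hST h, funext fun x => ?_⟩
  match hx : p x with
  | 0 => exact motzkinStep_eq_zero_iff.2 (hb.lt_orderMatching hST h (by simpa using hx))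
  | 2 => exact motzkinStep_eq_two_iff.2 (hb.orderMatching_lt hST h (by simpa using hx))
  | 1 =>
    exact motzkinStep_eq_one_iff.2 (orderMatching_of_notMem h (by simp [hx]) (by simp [hx]))

end Fintype

theorem Equiv.Perm.mul_self_eq_one_iff_involutive {β : Type*} (τ : Equiv.Perm β) :
    τ * τ = 1 ↔ Involutive τ := by
  simp [Equiv.ext_iff, Involutive]

theorem av4321_iff_not_hasNesting {n : ℕ} {τ : Equiv.Perm (Fin n)} (hτ : Involutive τ) :
    Av4321 τ ↔ ¬ HasNesting τ := by
  refine not_congr ⟨fun ⟨i, j, k, l, hij, hjk, hkl, hlk, hkj, hji⟩ => ?_, ?_⟩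
  · rcases lt_trichotomy j (τ j) with h | h | h
    · exact ⟨i, j, τ j, τ i, hij, h, hji, rfl, rfl⟩
    · exact ⟨τ l, τ k, k, l, hlk, (hkj.trans_eq h.symm).trans hjk, hkl, hτ l, hτ k⟩
    · exact ⟨τ k, τ j, j, k, hkj, h, hjk, hτ k, hτ j⟩
  · rintro ⟨a, b, _, _, hab, hbc, hcd, rfl, rfl⟩
    exact ⟨a, b, τ b, τ a, hab, hbc, hcd, by rwa [hτ, hτ], by rwa [hτ], hcd⟩

theorem sum_motzkinWeight {ι : Type*} (s : Finset ι) (f : ι → Fin 3) :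
    ∑ i ∈ s, (![1, 0, -1] : Fin 3 → ℤ) (f i) =
      (#{i ∈ s | f i = 0} : ℤ) - #{i ∈ s | f i = 2} := by
  have hweight (v : Fin 3) : (![1, 0, -1] : Fin 3 → ℤ) v
      = (if v = 0 then 1 else 0) - (if v = 2 then 1 else 0) := by
    fin_cases v <;> rfl
  simp only [hweight, sum_sub_distrib, sum_boole]

section MotzkinPath

variable {n : ℕ}

def IsMotzkinPath (f : Fin n → Fin 3) : Prop :=
  (∀ k ≤ n, 0 ≤ ∑ i ∈ univ.filter (fun i : Fin n => (i : ℕ) < k),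
      (![1, 0, -1] : Fin 3 → ℤ) (f i)) ∧
    ∑ i, (![1, 0, -1] : Fin 3 → ℤ) (f i) = 0

theorem motzkinNumber_eq_card (n : ℕ) :
    motzkinNumber n = Nat.card {f : Fin n → Fin 3 // IsMotzkinPath f} :=
  rfl

theorem isMotzkinPath_motzkinStep {τ : Fin n → Fin n} (hτ : Involutive τ) :
    IsMotzkinPath (motzkinStep τ) := by
  have hzero (s : Finset (Fin n)) : {i ∈ s | motzkinStep τ i = 0} = {i ∈ s | i < τ i} :=
    filter_congr fun _ _ => motzkinStep_eq_zero_iff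
  have htwo (s : Finset (Fin n)) : {i ∈ s | motzkinStep τ i = 2} = {i ∈ s | τ i < i} :=
    filter_congr fun _ _ => motzkinStep_eq_two_iff
  refine ⟨fun k _ => ?_, ?_⟩
  · rw [sum_motzkinWeight, hzero, htwo, sub_nonneg, Nat.cast_le]
    refine card_filter_closers_le hτ fun i j hji hj => ?_
    simp only [coe_filter, mem_univ, true_and, Set.mem_ofPred_eq] at hj ⊢
    exact lt_of_le_of_lt hji hj
  · rw [sum_motzkinWeight, hzero, htwo, sub_eq_zero, Nat.cast_inj]
    exact (card_closers_eq hτ).symm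

theorem IsMotzkinPath.card_eq {f : Fin n → Fin 3} (hf : IsMotzkinPath f) :
    #{i | f i = 2} = #{i | f i = 0} := by
  have := hf.2
  rw [sum_motzkinWeight, sub_eq_zero, Nat.cast_inj] at this
  exact this.symm

theorem IsMotzkinPath.isBallotPair {f : Fin n → Fin 3} (hf : IsMotzkinPath f) :
    IsBallotPair {i | f i = 0} {i | f i = 2} := by
  intro c
  have hprefix (v : Fin 3) :
      (univ.filter (fun i : Fin n => (i : ℕ) < c + 1)).filter (f · = v) =
        ({i | f i = v} : Finset (Fin n)).filter (· ≤ c) := by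
    ext i
    simp only [mem_filter, mem_univ, true_and, Fin.le_def]
    omega
  have := hf.1 (c + 1) c.isLt
  rwa [sum_motzkinWeight, sub_nonneg, Nat.cast_le, hprefix, hprefix] at this

end MotzkinPath

theorem involutions_avoiding_4321_card (n : ℕ) :
    Nat.card {τ : Equiv.Perm (Fin n) // τ * τ = 1 ∧ Av4321 τ} = motzkinNumber n := by
  have hiff (τ : Equiv.Perm (Fin n)) :
      τ * τ = 1 ∧ Av4321 τ ↔ Involutive τ ∧ ¬ HasNesting τ := by
    rw [Equiv.Perm.mul_self_eq_one_iff_involutive]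
    exact and_congr_right av4321_iff_not_hasNesting
  simp_rw [hiff, motzkinNumber_eq_card]
  refine Nat.card_eq_of_bijective
    (fun τ => ⟨motzkinStep τ.1, isMotzkinPath_motzkinStep τ.2.1⟩) ⟨?_, ?_⟩
  · rintro ⟨τ₁, hinv₁, hn₁⟩ ⟨τ₂, hinv₂, hn₂⟩ h
    exact Subtype.ext <| DFunLike.coe_injective <|
      eq_of_motzkinStep_eq hinv₁ hinv₂ hn₁ hn₂ (congrArg Subtype.val h)
  · rintro ⟨p, hp⟩
    obtain ⟨g, hinv, hn, rfl⟩ := exists_motzkinStep_eq p hp.card_eq hp.isBallotPair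
    exact ⟨⟨hinv.toPerm, hinv, hn⟩, rfl⟩
end

section
/- The number of involutions of {1,...,n} avoiding the pattern 3412 equals the n-th Motzkin number. -/
def Av3412 {n : ℕ} (σ : Equiv.Perm (Fin n)) : Prop :=
  ¬ ∃ i j k l : Fin n, i < j ∧ j < k ∧ k < l ∧ σ k < σ l ∧ σ l < σ i ∧ σ i < σ j

namespace MZ
open Finset

variable {n : ℕ}

def w : Fin 3 → ℤ := ![1, 0, -1]

lemma fin3_cases (v : Fin 3) : v = 0 ∨ v = 1 ∨ v = 2 := by revert v; decide

lemma w_eq_zero_iff {v : Fin 3} : w v = 1 ↔ v = 0 := by revert v; decide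
lemma w_eq_two_iff {v : Fin 3} : w v = -1 ↔ v = 2 := by revert v; decide
lemma w_le_one (v : Fin 3) : w v ≤ 1 := by revert v; decide
lemma w_ge_neg_one (v : Fin 3) : -1 ≤ w v := by revert v; decide

def Hf (f : Fin n → Fin 3) (k : ℕ) : ℤ :=
  ∑ i ∈ Finset.univ.filter (fun i : Fin n => (i : ℕ) < k), w (f i)

lemma Hf_zero (f : Fin n → Fin 3) : Hf f 0 = 0 := by simp [Hf]

lemma Hf_succ (f : Fin n → Fin 3) {k : ℕ} (hk : k < n) :
    Hf f (k + 1) = Hf f k + w (f ⟨k, hk⟩) := by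
  have hset : Finset.univ.filter (fun i : Fin n => (i : ℕ) < k + 1)
      = insert ⟨k, hk⟩ (Finset.univ.filter (fun i : Fin n => (i : ℕ) < k)) := by
    ext a
    simp only [mem_filter, mem_insert, mem_univ, true_and, Fin.ext_iff]
    omega
  have hmem : (⟨k, hk⟩ : Fin n) ∉ Finset.univ.filter (fun i : Fin n => (i : ℕ) < k) := by
    simp
  rw [Hf, Hf, hset, Finset.sum_insert hmem]
  ring

lemma Hf_stable (f : Fin n → Fin 3) {k : ℕ} (hk : n ≤ k) :
    Hf f (k + 1) = Hf f k := by
  unfold Hf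
  rw [Finset.filter_true_of_mem (fun i _ => lt_of_lt_of_le i.isLt (by omega)),
    Finset.filter_true_of_mem (fun i _ => lt_of_lt_of_le i.isLt (by omega))]

lemma Hf_total (f : Fin n → Fin 3) : Hf f n = ∑ i : Fin n, w (f i) := by
  unfold Hf
  congr 1
  ext a
  simp [a.isLt]

/-- Discrete intermediate value theorem (upward crossing, steps bounded above by 1). -/
lemma ivt (g : ℕ → ℤ) (v : ℤ) :
    ∀ (d x : ℕ), (∀ k, x ≤ k → k < x + d → g (k + 1) ≤ g k + 1) →
      g x ≤ v → v ≤ g (x + d) → ∃ m, x ≤ m ∧ m ≤ x + d ∧ g m = v := by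
  intro d
  induction d with
  | zero =>
    intro x _ h1 h2
    simp only [Nat.add_zero] at h2
    exact ⟨x, le_refl x, by omega, le_antisymm h1 h2⟩
  | succ d ih =>
    intro x hstep h1 h2
    rcases eq_or_lt_of_le h1 with h | h
    · exact ⟨x, le_refl x, by omega, h⟩
    · have hs : g (x + 1) ≤ g x + 1 := hstep x (le_refl x) (by omega)
      have h1' : g (x + 1) ≤ v := by omega
      have h2' : v ≤ g ((x + 1) + d) := by
        have : (x+1) + d = x + (d+1) := by omega
        rw [this]; exact h2
      obtain ⟨m, hm1, hm2, hm3⟩ := ih (x + 1)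
        (fun k hk1 hk2 => hstep k (by omega) (by omega)) h1' h2'
      exact ⟨m, by omega, by omega, hm3⟩

lemma Hf_step_le (f : Fin n → Fin 3) {k : ℕ} : Hf f (k + 1) ≤ Hf f k + 1 := by
  rcases lt_or_ge k n with hk | hk
  · rw [Hf_succ f hk]; have := w_le_one (f ⟨k, hk⟩); omega
  · rw [Hf_stable f hk]; omega

lemma Hf_step_ge (f : Fin n → Fin 3) {k : ℕ} : Hf f k - 1 ≤ Hf f (k + 1) := by
  rcases lt_or_ge k n with hk | hk
  · rw [Hf_succ f hk]; have := w_ge_neg_one (f ⟨k, hk⟩); omega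
  · rw [Hf_stable f hk]; omega

/-- upward IVT specialized to Hf on `[x, y]`. -/
lemma Hf_ivt_up (f : Fin n → Fin 3) {x y : ℕ} (hxy : x ≤ y) {v : ℤ}
    (h1 : Hf f x ≤ v) (h2 : v ≤ Hf f y) : ∃ m, x ≤ m ∧ m ≤ y ∧ Hf f m = v := by
  obtain ⟨m, hm1, hm2, hm3⟩ := ivt (Hf f) v (y - x) x
    (fun k _ _ => Hf_step_le f) h1 (by rwa [show x + (y - x) = y by omega])
  exact ⟨m, hm1, by omega, hm3⟩

/-- downward IVT specialized to Hf on `[x, y]`. -/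
lemma Hf_ivt_down (f : Fin n → Fin 3) {x y : ℕ} (hxy : x ≤ y) {v : ℤ}
    (h1 : v ≤ Hf f x) (h2 : Hf f y ≤ v) : ∃ m, x ≤ m ∧ m ≤ y ∧ Hf f m = v := by
  obtain ⟨m, hm1, hm2, hm3⟩ := ivt (fun k => -(Hf f k)) (-v) (y - x) x
    (fun k _ _ => show -(Hf f (k+1)) ≤ -(Hf f k) + 1 by have := Hf_step_ge f (k := k); omega)
    (show -(Hf f x) ≤ -v by omega)
    (by rw [show x + (y - x) = y by omega]; show -v ≤ -(Hf f y); omega)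
  have hm3' : -(Hf f m) = -v := hm3
  exact ⟨m, hm1, by omega, by omega⟩


def Adef (f : Fin n → Fin 3) (b : ℕ) : ℕ :=
  Nat.findGreatest (fun a => Hf f a + 1 = Hf f b) (b - 1)

noncomputable def Bdef (f : Fin n → Fin 3) (a : ℕ) : ℕ :=
  sInf {m | a < m ∧ Hf f (m + 1) = Hf f a}

lemma Adef_eq (f : Fin n → Fin 3) (b : ℕ) :
    Adef f b = Nat.findGreatest (fun a => Hf f a + 1 = Hf f b) (b - 1) := rfl

lemma Bdef_eq (f : Fin n → Fin 3) (a : ℕ) :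
    Bdef f a = sInf {m | a < m ∧ Hf f (m + 1) = Hf f a} := rfl

lemma down_spec (f : Fin n → Fin 3) (hnn : ∀ k, k ≤ n → 0 ≤ Hf f k)
    {b : ℕ} (hb : b < n) (hfb : f ⟨b, hb⟩ = 2) :
    Adef f b < b ∧ Hf f (Adef f b) + 1 = Hf f b ∧
    (∀ x, Adef f b < x → x ≤ b → Hf f b - 1 < Hf f x) ∧
    (∃ h : Adef f b < n, f ⟨Adef f b, h⟩ = 0) ∧ Bdef f (Adef f b) = b := by
  have hstepb : Hf f (b + 1) = Hf f b - 1 := by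
    rw [Hf_succ f hb, hfb, show w 2 = (-1 : ℤ) from rfl]; ring
  have hb1 : 1 ≤ Hf f b := by have := hnn (b + 1) (by omega); omega
  have hbpos : 0 < b := by
    rcases Nat.eq_zero_or_pos b with h | h
    · exfalso; rw [h, Hf_zero] at hb1; omega
    · exact h
  obtain ⟨m, hm0, hmb, hmv⟩ := Hf_ivt_up f (x := 0) (y := b) (by omega)
    (v := Hf f b - 1) (by rw [Hf_zero]; omega) (by omega)
  have hmb' : m ≠ b := by intro h; rw [h] at hmv; omega
  have hPa : Hf f (Adef f b) + 1 = Hf f b := by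
    rw [Adef_eq]
    exact Nat.findGreatest_spec (P := fun a => Hf f a + 1 = Hf f b)
      (n := b - 1) (m := m) (by omega) (by omega)
  have hale : Adef f b ≤ b - 1 := by rw [Adef_eq]; exact Nat.findGreatest_le _
  have hab : Adef f b < b := by omega
  have hgt : ∀ x, Adef f b < x → x ≤ b → Hf f b - 1 < Hf f x := by
    intro x hax hxb
    by_contra hcon; push_neg at hcon
    obtain ⟨m', h1, h2, h3⟩ := Hf_ivt_up f (x := x) (y := b) hxb
      (v := Hf f b - 1) hcon (by omega)
    have hm'b : m' ≠ b := by intro h; rw [h] at h3; omega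
    refine Nat.findGreatest_is_greatest (P := fun a => Hf f a + 1 = Hf f b)
      (n := b - 1) (k := m') ?_ (by omega) (by omega)
    rw [Adef_eq] at hax; omega
  have han : Adef f b < n := lt_trans hab hb
  have hfa : f ⟨Adef f b, han⟩ = 0 := by
    have h1 : Hf f (Adef f b + 1) ≤ Hf f (Adef f b) + 1 := Hf_step_le f
    have h2 : Hf f b - 1 < Hf f (Adef f b + 1) := hgt _ (by omega) (by omega)
    have h3 : Hf f (Adef f b + 1) = Hf f (Adef f b) + w (f ⟨Adef f b, han⟩) :=
      Hf_succ f han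
    exact w_eq_zero_iff.mp (by omega)
  have hBa : Bdef f (Adef f b) = b := by
    have hbmem : b ∈ {m | Adef f b < m ∧ Hf f (m + 1) = Hf f (Adef f b)} :=
      ⟨hab, by omega⟩
    have hle : Bdef f (Adef f b) ≤ b := by rw [Bdef_eq]; exact Nat.sInf_le hbmem
    have hmem : Bdef f (Adef f b) ∈
        {m | Adef f b < m ∧ Hf f (m + 1) = Hf f (Adef f b)} := by
      rw [Bdef_eq]; exact Nat.sInf_mem ⟨b, hbmem⟩
    obtain ⟨h1, h2⟩ := hmem
    rcases eq_or_lt_of_le hle with h | h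
    · exact h
    · exfalso
      have := hgt (Bdef f (Adef f b) + 1) (by omega) (by omega)
      omega
  exact ⟨hab, hPa, hgt, ⟨han, hfa⟩, hBa⟩

lemma up_spec (f : Fin n → Fin 3) (hnn : ∀ k, k ≤ n → 0 ≤ Hf f k)
    (htot : Hf f n = 0) {a : ℕ} (ha : a < n) (hfa : f ⟨a, ha⟩ = 0) :
    a < Bdef f a ∧ Bdef f a < n ∧
    (∀ x, a < x → x ≤ Bdef f a → Hf f a < Hf f x) ∧
    Hf f (Bdef f a + 1) = Hf f a ∧
    (∃ h : Bdef f a < n, f ⟨Bdef f a, h⟩ = 2) ∧ Adef f (Bdef f a) = a := by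
  have hstepa : Hf f (a + 1) = Hf f a + 1 := by
    rw [Hf_succ f ha, hfa, show w 0 = (1 : ℤ) from rfl]
  have hnna : 0 ≤ Hf f a := hnn a (by omega)
  obtain ⟨m', h1, h2, h3⟩ := Hf_ivt_down f (x := a + 1) (y := n) (by omega)
    (v := Hf f a) (by omega) (by omega)
  have hm'1 : m' ≠ a + 1 := by intro h; rw [h] at h3; omega
  have hmS : m' - 1 ∈ {m | a < m ∧ Hf f (m + 1) = Hf f a} :=
    ⟨by omega, by rw [show m' - 1 + 1 = m' by omega]; exact h3⟩
  have hmem : Bdef f a ∈ {m | a < m ∧ Hf f (m + 1) = Hf f a} := by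
    rw [Bdef_eq]; exact Nat.sInf_mem ⟨m' - 1, hmS⟩
  obtain ⟨hab, hHb1⟩ := hmem
  have hble : Bdef f a ≤ m' - 1 := by rw [Bdef_eq]; exact Nat.sInf_le hmS
  have hbn : Bdef f a < n := by omega
  have hne : ∀ y, a < y → y ≤ Bdef f a → Hf f y ≠ Hf f a := by
    intro y hay hyb hcon
    have hy1 : y ≠ a + 1 := by intro h; rw [h] at hcon; omega
    have hyS : y - 1 ∈ {m | a < m ∧ Hf f (m + 1) = Hf f a} :=
      ⟨by omega, by rw [show y - 1 + 1 = y by omega]; exact hcon⟩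
    have : Bdef f a ≤ y - 1 := by rw [Bdef_eq]; exact Nat.sInf_le hyS
    omega
  have hgt : ∀ x, a < x → x ≤ Bdef f a → Hf f a < Hf f x := by
    intro x hax hxb
    by_contra hcon; push_neg at hcon
    obtain ⟨m2, hm2a, hm2b, hm2c⟩ := Hf_ivt_down f (x := a + 1) (y := x)
      (by omega) (v := Hf f a) (by omega) hcon
    exact hne m2 (by omega) (by omega) hm2c
  have hHb : Hf f (Bdef f a) = Hf f a + 1 := by
    have hg := hgt (Bdef f a) (by omega) (le_refl _)
    have hs := Hf_step_ge f (k := Bdef f a)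
    omega
  have hfb : f ⟨Bdef f a, hbn⟩ = 2 := by
    have hs := Hf_succ f hbn
    exact w_eq_two_iff.mp (by omega)
  have hAb : Adef f (Bdef f a) = a := by
    have hPa : Hf f a + 1 = Hf f (Bdef f a) := by omega
    have h1 : a ≤ Nat.findGreatest (fun x => Hf f x + 1 = Hf f (Bdef f a))
        (Bdef f a - 1) := Nat.le_findGreatest (n := Bdef f a - 1) (by omega) hPa
    have h2 : Nat.findGreatest (fun x => Hf f x + 1 = Hf f (Bdef f a))
        (Bdef f a - 1) ≤ Bdef f a - 1 := Nat.findGreatest_le _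
    have h3 : Hf f (Nat.findGreatest (fun x => Hf f x + 1 = Hf f (Bdef f a))
        (Bdef f a - 1)) + 1 = Hf f (Bdef f a) :=
      Nat.findGreatest_spec (P := fun x => Hf f x + 1 = Hf f (Bdef f a))
        (n := Bdef f a - 1) (m := a) (by omega) hPa
    rw [Adef_eq]
    rcases eq_or_lt_of_le h1 with h | h
    · omega
    · exfalso
      have := hgt _ h (by omega)
      omega
  exact ⟨hab, hbn, hgt, hHb1, ⟨hbn, hfb⟩, hAb⟩


noncomputable def gN (f : Fin n → Fin 3) (i : ℕ) : ℕ :=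
  if h : i < n then
    (if f ⟨i, h⟩ = 0 then Bdef f i else if f ⟨i, h⟩ = 2 then Adef f i else i)
  else i

lemma gN_up (f : Fin n → Fin 3) {i : ℕ} (h : i < n) (hf : f ⟨i, h⟩ = 0) :
    gN f i = Bdef f i := by simp [gN, h, hf]

lemma gN_down (f : Fin n → Fin 3) {i : ℕ} (h : i < n) (hf : f ⟨i, h⟩ = 2) :
    gN f i = Adef f i := by simp [gN, h, hf]

lemma gN_flat (f : Fin n → Fin 3) {i : ℕ} (h : i < n) (hf : f ⟨i, h⟩ = 1) :
    gN f i = i := by simp [gN, h, hf]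

lemma gN_lt (f : Fin n → Fin 3) (hnn : ∀ k, k ≤ n → 0 ≤ Hf f k)
    (htot : Hf f n = 0) {i : ℕ} (h : i < n) : gN f i < n := by
  rcases fin3_cases (f ⟨i, h⟩) with h0 | h1 | h2
  · rw [gN_up f h h0]; exact (up_spec f hnn htot h h0).2.1
  · rw [gN_flat f h h1]; exact h
  · rw [gN_down f h h2]; exact lt_trans (down_spec f hnn h h2).1 h

lemma gN_invol (f : Fin n → Fin 3) (hnn : ∀ k, k ≤ n → 0 ≤ Hf f k)
    (htot : Hf f n = 0) {i : ℕ} (h : i < n) : gN f (gN f i) = i := by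
  rcases fin3_cases (f ⟨i, h⟩) with h0 | h1 | h2
  · obtain ⟨_, _, _, _, ⟨hbn', hfb⟩, hA⟩ := up_spec f hnn htot h h0
    rw [gN_up f h h0, gN_down f hbn' hfb, hA]
  · rw [gN_flat f h h1, gN_flat f h h1]
  · obtain ⟨_, hPa, _, ⟨han, hfa⟩, hB⟩ := down_spec f hnn h h2
    rw [gN_down f h h2, gN_up f han hfa, hB]

noncomputable def mkPerm (f : Fin n → Fin 3) (hnn : ∀ k, k ≤ n → 0 ≤ Hf f k)
    (htot : Hf f n = 0) : Equiv.Perm (Fin n) where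
  toFun i := ⟨gN f i, gN_lt f hnn htot i.isLt⟩
  invFun i := ⟨gN f i, gN_lt f hnn htot i.isLt⟩
  left_inv i := Fin.ext (gN_invol f hnn htot i.isLt)
  right_inv i := Fin.ext (gN_invol f hnn htot i.isLt)

lemma mkPerm_apply (f : Fin n → Fin 3) (hnn : ∀ k, k ≤ n → 0 ≤ Hf f k)
    (htot : Hf f n = 0) (i : Fin n) :
    ((mkPerm f hnn htot) i : ℕ) = gN f i := rfl

def pathOf (τ : Equiv.Perm (Fin n)) : Fin n → Fin 3 :=
  fun i => if τ i = i then 1 else if i < τ i then 0 else 2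

lemma pathOf_eq_one {τ : Equiv.Perm (Fin n)} {i : Fin n} (h : τ i = i) :
    pathOf τ i = 1 := by simp [pathOf, h]

lemma pathOf_eq_zero {τ : Equiv.Perm (Fin n)} {i : Fin n} (h : i < τ i) :
    pathOf τ i = 0 := by
  unfold pathOf
  rw [if_neg (ne_of_gt h), if_pos h]

lemma pathOf_eq_two {τ : Equiv.Perm (Fin n)} {i : Fin n} (h : τ i < i) :
    pathOf τ i = 2 := by
  unfold pathOf
  rw [if_neg (ne_of_lt h), if_neg (lt_asymm h)]

def Oset (τ : Equiv.Perm (Fin n)) (k : ℕ) : Finset (Fin n) :=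
  Finset.univ.filter (fun a => (a : ℕ) < k ∧ k ≤ (τ a : ℕ))

lemma key (τ : Equiv.Perm (Fin n)) (hτ : ∀ x, τ (τ x) = x) :
    ∀ k : ℕ, Hf (pathOf τ) k = (Oset τ k).card := by
  intro k
  induction k with
  | zero => simp [Hf_zero, Oset]
  | succ k ih =>
    rcases lt_or_ge k n with hk | hk
    · have hK : Hf (pathOf τ) (k + 1)
          = Hf (pathOf τ) k + w (pathOf τ ⟨k, hk⟩) := Hf_succ _ hk
      set K : Fin n := ⟨k, hk⟩ with hKdef
      have hKval : (K : ℕ) = k := rfl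
      rcases lt_trichotomy (τ K) K with hc | hc | hc
      · -- down step
        have hcv : (τ K : ℕ) < k := hc
        have hpath : pathOf τ K = 2 := pathOf_eq_two hc
        have hmem : τ K ∉ Oset τ (k + 1) := by
          simp only [Oset, mem_filter, mem_univ, true_and, not_and]
          intro _
          rw [hτ K]
          omega
        have hset : Oset τ k = insert (τ K) (Oset τ (k + 1)) := by
          ext a
          simp only [Oset, mem_filter, mem_insert, mem_univ, true_and]
          constructor
          · rintro ⟨h1, h2⟩
            by_cases he : (τ a : ℕ) = k
            · left
              have hτa : τ a = K := Fin.ext he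
              have : τ (τ a) = τ K := by rw [hτa]
              rw [hτ a] at this
              exact this
            · right; omega
          · rintro (rfl | ⟨h1, h2⟩)
            · exact ⟨hcv, le_of_eq (by rw [hτ K])⟩
            · have hne : (a : ℕ) ≠ k := by
                intro he
                have : a = K := Fin.ext he
                rw [this] at h2
                omega
              omega
        have hcard : ((Oset τ k).card : ℤ) = (Oset τ (k + 1)).card + 1 := by
          rw [hset, Finset.card_insert_of_notMem hmem]
          push_cast; ring
        rw [hK, hpath, show w 2 = (-1 : ℤ) from rfl, ih]
        omega
      · -- flat step
        have hpath : pathOf τ K = 1 := pathOf_eq_one hc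
        have hset : Oset τ (k + 1) = Oset τ k := by
          ext a
          simp only [Oset, mem_filter, mem_univ, true_and]
          constructor
          · rintro ⟨h1, h2⟩
            have hne : (a : ℕ) ≠ k := by
              intro he
              have ha : a = K := Fin.ext he
              rw [ha, hc] at h2
              omega
            omega
          · rintro ⟨h1, h2⟩
            have hne : (τ a : ℕ) ≠ k := by
              intro he
              have ha : τ a = K := Fin.ext he
              have : τ (τ a) = τ K := by rw [ha]
              rw [hτ a, hc] at this
              rw [this] at h1
              omega
            omega
        rw [hK, hpath, show w 1 = (0 : ℤ) from rfl, ih, hset]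
        ring
      · -- up step
        have hcv : k < (τ K : ℕ) := hc
        have hpath : pathOf τ K = 0 := pathOf_eq_zero hc
        have hmem : K ∉ Oset τ k := by
          simp only [Oset, mem_filter, mem_univ, true_and, not_and]
          intro h
          omega
        have hset : Oset τ (k + 1) = insert K (Oset τ k) := by
          ext a
          simp only [Oset, mem_filter, mem_insert, mem_univ, true_and]
          constructor
          · rintro ⟨h1, h2⟩
            by_cases he : (a : ℕ) = k
            · left; exact Fin.ext he
            · right; omega
          · rintro (rfl | ⟨h1, h2⟩)
            · exact ⟨by omega, by omega⟩
            · have hne : (τ a : ℕ) ≠ k := by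
                intro he
                have ha : τ a = K := Fin.ext he
                have : τ (τ a) = τ K := by rw [ha]
                rw [hτ a] at this
                rw [this] at h1
                omega
              omega
        rw [hK, hpath, show w 0 = (1 : ℤ) from rfl, ih, hset,
          Finset.card_insert_of_notMem hmem]
        push_cast; ring
    · -- k ≥ n
      have h1 : Oset τ k = ∅ := by
        ext a
        simp only [Oset, mem_filter, mem_univ, true_and, Finset.notMem_empty,
          iff_false, not_and]
        intro _
        have := (τ a).isLt
        omega
      have h2 : Oset τ (k + 1) = ∅ := by
        ext a
        simp only [Oset, mem_filter, mem_univ, true_and, Finset.notMem_empty,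
          iff_false, not_and]
        intro _
        have := (τ a).isLt
        omega
      rw [Hf_stable _ hk, h2, ih, h1]


lemma Oset_empty (τ : Equiv.Perm (Fin n)) {k : ℕ} (hk : n ≤ k) : Oset τ k = ∅ := by
  ext a
  simp only [Oset, mem_filter, mem_univ, true_and, Finset.notMem_empty, iff_false,
    not_and]
  intro _
  have := (τ a).isLt
  omega

lemma path_nonneg (τ : Equiv.Perm (Fin n)) (hτ : ∀ x, τ (τ x) = x) :
    ∀ k, k ≤ n → 0 ≤ Hf (pathOf τ) k := by
  intro k _
  rw [key τ hτ k]
  exact Int.natCast_nonneg _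

lemma path_total (τ : Equiv.Perm (Fin n)) (hτ : ∀ x, τ (τ x) = x) :
    Hf (pathOf τ) n = 0 := by
  rw [key τ hτ n, Oset_empty τ le_rfl]
  simp

def NC (τ : Equiv.Perm (Fin n)) : Prop :=
  ∀ x y : Fin n, x < y → y < τ x → τ x < τ y → False

lemma NC_of_Av {τ : Equiv.Perm (Fin n)} (hτ : ∀ x, τ (τ x) = x) (h : Av3412 τ) :
    NC τ := by
  intro x y h1 h2 h3
  refine h ⟨x, y, τ x, τ y, h1, h2, h3, ?_, ?_, h3⟩
  · rw [hτ x, hτ y]; exact h1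
  · rw [hτ y]; exact h2

lemma Av_of_NC {τ : Equiv.Perm (Fin n)} (hτ : ∀ x, τ (τ x) = x) (h : NC τ) :
    Av3412 τ := by
  rintro ⟨i, j, k, l, hij, hjk, hkl, h1, h2, h3⟩
  rcases lt_or_ge (τ l) k with hb | hb
  · exact h (τ k) (τ l) h1 (by rw [hτ k]; exact hb) (by rw [hτ k, hτ l]; exact hkl)
  · exact h i j hij (lt_trans (lt_of_lt_of_le hjk hb) h2) h3

lemma recover {τ : Equiv.Perm (Fin n)} (hτ : ∀ x, τ (τ x) = x) (hnc : NC τ)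
    {b : Fin n} (hdown : τ b < b) : ((τ b : ℕ)) = Adef (pathOf τ) (b : ℕ) := by
  have hab : (τ b : ℕ) < (b : ℕ) := Fin.lt_def.mp hdown
  have hins : Oset τ (b : ℕ) = insert (τ b) (Oset τ ((τ b : ℕ))) := by
    ext x
    simp only [Oset, mem_filter, mem_insert, mem_univ, true_and]
    constructor
    · rintro ⟨h1, h2⟩
      by_cases he : τ x = b
      · left
        have h3' : τ (τ x) = τ b := by rw [he]
        rw [hτ x] at h3'
        exact h3'
      · have hbx : (b : ℕ) < (τ x : ℕ) := by
          have : (τ x : ℕ) ≠ (b : ℕ) := fun hh => he (Fin.ext hh)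
          omega
        have hxa : x < τ b := by
          rcases lt_trichotomy x (τ b) with h | h | h
          · exact h
          · exfalso; apply he; rw [h, hτ]
          · exfalso
            exact hnc (τ b) x h (by rw [hτ]; exact Fin.lt_def.mpr h1)
              (by rw [hτ]; exact Fin.lt_def.mpr hbx)
        right
        exact ⟨Fin.lt_def.mp hxa, by omega⟩
    · rintro (rfl | ⟨h1, h2⟩)
      · exact ⟨hab, le_of_eq (by rw [hτ])⟩
      · refine ⟨by omega, ?_⟩
        have hne1 : τ x ≠ τ b := by
          intro hh
          have hxb : x = b := τ.injective hh
          rw [hxb] at h1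
          omega
        have hne2 : τ x ≠ b := by
          intro hh
          have h3' : τ (τ x) = τ b := by rw [hh]
          rw [hτ x] at h3'
          rw [h3'] at h1
          omega
        rcases lt_trichotomy (τ x) b with h | h | h
        · exfalso
          exact hnc x (τ b) (Fin.lt_def.mpr h1)
            (lt_of_le_of_ne (Fin.le_def.mpr h2) (Ne.symm hne1))
            (by rw [hτ]; exact h)
        · exact absurd h hne2
        · have := Fin.lt_def.mp h; omega
  have hnotmem : τ b ∉ Oset τ ((τ b : ℕ)) := by simp [Oset]
  have hgt2 : ∀ x : ℕ, (τ b : ℕ) < x → x < (b : ℕ) →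
      Hf (pathOf τ) (b : ℕ) - 1 < Hf (pathOf τ) x := by
    intro x hx1 hx2
    have hsub : insert (τ b) (Oset τ ((τ b : ℕ))) ⊆ Oset τ x := by
      intro y hy
      rcases Finset.mem_insert.mp hy with rfl | hy
      · simp only [Oset, mem_filter, mem_univ, true_and]
        refine ⟨hx1, ?_⟩
        rw [hτ]
        omega
      · simp only [Oset, mem_filter, mem_univ, true_and] at hy ⊢
        obtain ⟨hy1, hy2⟩ := hy
        refine ⟨by omega, ?_⟩
        have hne1 : τ y ≠ τ b := by
          intro hh
          have hyb : y = b := τ.injective hh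
          rw [hyb] at hy1
          omega
        have hne2 : τ y ≠ b := by
          intro hh
          have h3' : τ (τ y) = τ b := by rw [hh]
          rw [hτ y] at h3'
          rw [h3'] at hy1
          omega
        rcases lt_trichotomy (τ y) b with h | h | h
        · exfalso
          exact hnc y (τ b) (Fin.lt_def.mpr hy1)
            (lt_of_le_of_ne (Fin.le_def.mpr hy2) (Ne.symm hne1))
            (by rw [hτ]; exact h)
        · exact absurd h hne2
        · have := Fin.lt_def.mp h; omega
    have hcard := Finset.card_le_card hsub
    rw [Finset.card_insert_of_notMem hnotmem] at hcard
    have k1 := key τ hτ ((τ b : ℕ))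
    have k2 := key τ hτ (b : ℕ)
    have k3 := key τ hτ x
    rw [hins, Finset.card_insert_of_notMem hnotmem] at k2
    push_cast at k1 k2 k3
    omega
  have k1 := key τ hτ ((τ b : ℕ))
  have k2 := key τ hτ (b : ℕ)
  rw [hins, Finset.card_insert_of_notMem hnotmem] at k2
  have hP : Hf (pathOf τ) ((τ b : ℕ)) + 1 = Hf (pathOf τ) (b : ℕ) := by
    push_cast at k1 k2
    omega
  have hble : (τ b : ℕ) ≤ (b : ℕ) - 1 := by omega
  have hfg1 : (τ b : ℕ) ≤ Nat.findGreatest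
      (fun z => Hf (pathOf τ) z + 1 = Hf (pathOf τ) (b : ℕ)) ((b : ℕ) - 1) :=
    Nat.le_findGreatest hble hP
  have hfg2 := Nat.findGreatest_le
    (P := fun z => Hf (pathOf τ) z + 1 = Hf (pathOf τ) (b : ℕ)) ((b : ℕ) - 1)
  have hfg3 : Hf (pathOf τ) (Nat.findGreatest
      (fun z => Hf (pathOf τ) z + 1 = Hf (pathOf τ) (b : ℕ)) ((b : ℕ) - 1)) + 1
      = Hf (pathOf τ) (b : ℕ) :=
    Nat.findGreatest_spec (P := fun z => Hf (pathOf τ) z + 1 = Hf (pathOf τ) (b : ℕ))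
      (n := (b : ℕ) - 1) (m := (τ b : ℕ)) hble hP
  rw [Adef_eq]
  rcases eq_or_lt_of_le hfg1 with h | h
  · exact h
  · exfalso
    have := hgt2 _ h (by omega)
    omega

lemma agree {τ : Equiv.Perm (Fin n)} (hτ : ∀ x, τ (τ x) = x) (hnc : NC τ)
    (i : Fin n) : ((τ i : ℕ)) = gN (pathOf τ) (i : ℕ) := by
  rcases lt_trichotomy (τ i) i with hlt | heq | hgt
  · rw [gN_down (pathOf τ) i.isLt (pathOf_eq_two hlt)]
    exact recover hτ hnc hlt
  · rw [gN_flat (pathOf τ) i.isLt (pathOf_eq_one heq), heq]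
  · have hdown : τ (τ i) < τ i := by rw [hτ]; exact hgt
    have h1 : ((τ (τ i) : ℕ)) = Adef (pathOf τ) ((τ i : ℕ)) := recover hτ hnc hdown
    rw [hτ] at h1
    have hnn := path_nonneg τ hτ
    have htot := path_total τ hτ
    have hfb : pathOf τ (τ i) = 2 := pathOf_eq_two hdown
    obtain ⟨_, _, _, _, hB⟩ := down_spec (pathOf τ) hnn ((τ i).isLt) hfb
    rw [gN_up (pathOf τ) i.isLt (pathOf_eq_zero hgt), h1]
    exact hB.symm

lemma mkPerm_path (f : Fin n → Fin 3) (hnn : ∀ k, k ≤ n → 0 ≤ Hf f k)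
    (htot : Hf f n = 0) : pathOf (mkPerm f hnn htot) = f := by
  funext i
  have hi := i.isLt
  have happ : ((mkPerm f hnn htot i : Fin n) : ℕ) = gN f (i : ℕ) := rfl
  rcases fin3_cases (f i) with h0 | h1 | h2
  · have hg : gN f (i : ℕ) = Bdef f (i : ℕ) := gN_up f hi h0
    have hlt : (i : ℕ) < ((mkPerm f hnn htot i : Fin n) : ℕ) := by
      rw [happ, hg]
      exact (up_spec f hnn htot hi h0).1
    rw [pathOf_eq_zero (Fin.lt_def.mpr hlt), h0]
  · have hg : gN f (i : ℕ) = (i : ℕ) := gN_flat f hi h1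
    have heq : mkPerm f hnn htot i = i := Fin.ext (by rw [happ, hg])
    rw [pathOf_eq_one heq, h1]
  · have hg : gN f (i : ℕ) = Adef f (i : ℕ) := gN_down f hi h2
    have hlt : ((mkPerm f hnn htot i : Fin n) : ℕ) < (i : ℕ) := by
      rw [happ, hg]
      exact (down_spec f hnn hi h2).1
    rw [pathOf_eq_two (Fin.lt_def.mpr hlt), h2]

lemma mkPerm_NC (f : Fin n → Fin 3) (hnn : ∀ k, k ≤ n → 0 ≤ Hf f k)
    (htot : Hf f n = 0) : NC (mkPerm f hnn htot) := by
  intro x y hxy hyx hlt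
  set τ := mkPerm f hnn htot with hτdef
  have happx : ((τ x : Fin n) : ℕ) = gN f (x : ℕ) := rfl
  have happy : ((τ y : Fin n) : ℕ) = gN f (y : ℕ) := rfl
  have hxy' : (x : ℕ) < (y : ℕ) := Fin.lt_def.mp hxy
  have hyx' : (y : ℕ) < ((τ x : Fin n) : ℕ) := Fin.lt_def.mp hyx
  have hlt' : ((τ x : Fin n) : ℕ) < ((τ y : Fin n) : ℕ) := Fin.lt_def.mp hlt
  have hfx : f ⟨(x : ℕ), x.isLt⟩ = 0 := by
    rcases fin3_cases (f ⟨(x : ℕ), x.isLt⟩) with h0 | h1 | h2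
    · exact h0
    · exfalso
      have : ((τ x : Fin n) : ℕ) = (x : ℕ) := by rw [happx, gN_flat f x.isLt h1]
      omega
    · exfalso
      have : ((τ x : Fin n) : ℕ) = Adef f (x : ℕ) := by rw [happx, gN_down f x.isLt h2]
      have := (down_spec f hnn x.isLt h2).1
      omega
  have hfy : f ⟨(y : ℕ), y.isLt⟩ = 0 := by
    rcases fin3_cases (f ⟨(y : ℕ), y.isLt⟩) with h0 | h1 | h2
    · exact h0
    · exfalso
      have : ((τ y : Fin n) : ℕ) = (y : ℕ) := by rw [happy, gN_flat f y.isLt h1]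
      omega
    · exfalso
      have : ((τ y : Fin n) : ℕ) = Adef f (y : ℕ) := by rw [happy, gN_down f y.isLt h2]
      have := (down_spec f hnn y.isLt h2).1
      omega
  have hBx : ((τ x : Fin n) : ℕ) = Bdef f (x : ℕ) := by rw [happx, gN_up f x.isLt hfx]
  have hBy : ((τ y : Fin n) : ℕ) = Bdef f (y : ℕ) := by rw [happy, gN_up f y.isLt hfy]
  obtain ⟨hax, hbxn, hgtx, hHx1, _, _⟩ := up_spec f hnn htot x.isLt hfx
  obtain ⟨hay, hbyn, hgty, hHy1, _, _⟩ := up_spec f hnn htot y.isLt hfy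
  have e1 : Hf f (x : ℕ) < Hf f (y : ℕ) := hgtx (y : ℕ) hxy' (by omega)
  have e2 : Hf f (y : ℕ) < Hf f (Bdef f (x : ℕ) + 1) :=
    hgty (Bdef f (x : ℕ) + 1) (by omega) (by omega)
  rw [hHx1] at e2
  omega

lemma invol_iff (τ : Equiv.Perm (Fin n)) : τ * τ = 1 ↔ ∀ x, τ (τ x) = x := by
  constructor
  · intro h x
    have := Equiv.ext_iff.mp h x
    rwa [Equiv.Perm.mul_apply, Equiv.Perm.one_apply] at this
  · intro h
    ext x
    rw [Equiv.Perm.mul_apply, h x, Equiv.Perm.one_apply]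

noncomputable def theEquiv (n : ℕ) :
    {τ : Equiv.Perm (Fin n) // τ * τ = 1 ∧ Av3412 τ} ≃
    {f : Fin n → Fin 3 //
      (∀ k : ℕ, k ≤ n → 0 ≤ ∑ i ∈ Finset.univ.filter (fun i : Fin n => (i : ℕ) < k),
          (![1, 0, -1] : Fin 3 → ℤ) (f i)) ∧
      (∑ i : Fin n, (![1, 0, -1] : Fin 3 → ℤ) (f i)) = 0} where
  toFun p := ⟨pathOf p.1,
    path_nonneg p.1 ((invol_iff p.1).mp p.2.1),
    (Hf_total (pathOf p.1)).symm.trans (path_total p.1 ((invol_iff p.1).mp p.2.1))⟩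
  invFun q := ⟨mkPerm q.1 q.2.1 ((Hf_total q.1).trans q.2.2),
    (invol_iff _).mpr (fun x => Fin.ext (gN_invol q.1 q.2.1 ((Hf_total q.1).trans q.2.2) x.isLt)),
    Av_of_NC ((invol_iff _).mp ((invol_iff _).mpr
      (fun x => Fin.ext (gN_invol q.1 q.2.1 ((Hf_total q.1).trans q.2.2) x.isLt))))
      (mkPerm_NC q.1 q.2.1 ((Hf_total q.1).trans q.2.2))⟩
  left_inv p := by
    apply Subtype.ext
    apply Equiv.ext
    intro i
    apply Fin.ext
    have hτ := (invol_iff p.1).mp p.2.1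
    have hnc := NC_of_Av hτ p.2.2
    exact ((agree hτ hnc i).symm : _)
  right_inv q := Subtype.ext (mkPerm_path q.1 q.2.1 ((Hf_total q.1).trans q.2.2))

end MZ

theorem involutions_avoiding_3412_card (n : ℕ) :
    Nat.card {τ : Equiv.Perm (Fin n) // τ * τ = 1 ∧ Av3412 τ} = motzkinNumber n := by
  exact Nat.card_congr (MZ.theEquiv n)
end

section
/- An involution τ of {1,...,n} avoids the pattern 4321 if and only if {1,...,n} can be partitioned into three sets F, E, D (fixed points, excedances, deficiencies) such that τ restricted to each set is increasing; equivalently, the sequence of fixed points, the sequence of excedances, and the sequence of images of excedances are each increasing subsequences of τ. -/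
theorem av4321_iff_three_increasing {n : ℕ} (τ : Equiv.Perm (Fin n)) (hτ : τ * τ = 1) :
    Av4321 τ ↔
      (∀ i j : Fin n, i < j →
        ((τ i = i ∧ τ j = j) → τ i < τ j) ∧
        ((i < τ i ∧ j < τ j) → τ i < τ j) ∧
        ((τ i < i ∧ τ j < j) → τ i < τ j)) := by
  have hinv : ∀ x, τ (τ x) = x := fun x => by
    rw [← Equiv.Perm.mul_apply, hτ, Equiv.Perm.one_apply]
  constructor
  · intro hA i j hij
    refine ⟨fun ⟨h1, h2⟩ => by rw [h1, h2]; exact hij, ?_, ?_⟩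
    · rintro ⟨h1, h2⟩
      by_contra hc
      push_neg at hc
      have hne : τ j ≠ τ i := fun h => absurd (τ.injective h) (ne_of_gt hij)
      have hlt : τ j < τ i := lt_of_le_of_ne hc hne
      exact hA ⟨i, j, τ j, τ i, hij, h2, hlt, by
        rw [hinv, hinv]; exact ⟨hij, h2, hlt⟩⟩
    · rintro ⟨h1, h2⟩
      by_contra hc
      push_neg at hc
      have hne : τ j ≠ τ i := fun h => absurd (τ.injective h) (ne_of_gt hij)
      have hlt : τ j < τ i := lt_of_le_of_ne hc hne
      exact hA ⟨τ j, τ i, i, j, hlt, h1, hij, by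
        rw [hinv, hinv]; exact ⟨hlt, h1, hij⟩⟩
  · rintro h ⟨i, j, k, l, hij, hjk, hkl, h1, h2, h3⟩
    have hik : i < k := hij.trans hjk
    have hil : i < l := hik.trans hkl
    have hjl : j < l := hjk.trans hkl
    have H1 := h i j hij
    have H2 := h i k hik
    have H3 := h i l hil
    have H4 := h j k hjk
    have H5 := h j l hjl
    have H6 := h k l hkl
    simp only [Fin.lt_def, Fin.ext_iff] at *
    omega
end

section
/- An involution τ of {1,...,n} avoids the pattern 312 if and only if there exist integers 0 = k_0 < k_1 < k_2 < ... < k_p = n such that τ, written in one-line notation, is the concatenation of the decreasing blocks (k_1, k_1−1, ..., 1), (k_2, k_2−1, ..., k_1+1), ..., (k_p, ..., k_{p−1}+1). -/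
def Av312 {n : ℕ} (σ : Equiv.Perm (Fin n)) : Prop :=
  ¬ ∃ i j k : Fin n, i < j ∧ j < k ∧ σ j < σ k ∧ σ k < σ i

section aux

variable {n : ℕ}

/-- Pointwise involution from `τ * τ = 1`. -/
lemma inv_pt (τ : Equiv.Perm (Fin n)) (hτ : τ * τ = 1) : ∀ m, τ (τ m) = m := by
  intro m
  have := congrArg (fun σ : Equiv.Perm (Fin n) => σ m) hτ
  simpa [Equiv.Perm.mul_apply] using this

/-- A breakpoint start is at most its image. -/
lemma start_le (τ : Equiv.Perm (Fin n)) (hτ : ∀ m, τ (τ m) = m)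
    {a : ℕ} (ha : a < n) (hB : ∀ m : Fin n, (m : ℕ) < a → (τ m : ℕ) < a) :
    a ≤ (τ ⟨a, ha⟩ : ℕ) := by
  by_contra h
  push_neg at h
  have := hB (τ ⟨a, ha⟩) h
  rw [hτ] at this
  simp at this

/-- Core lemma: starting at a breakpoint `a`, with `t = τ a`, the permutation reverses the
interval `[a, t]`. -/
lemma block_core (τ : Equiv.Perm (Fin n)) (hτ : ∀ m, τ (τ m) = m) (hav : Av312 τ)
    {a : ℕ} (ha : a < n) (hB : ∀ m : Fin n, (m : ℕ) < a → (τ m : ℕ) < a) :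
    ∀ m : Fin n, a ≤ (m : ℕ) → (m : ℕ) ≤ (τ ⟨a, ha⟩ : ℕ) →
      (τ m : ℕ) + (m : ℕ) = a + (τ ⟨a, ha⟩ : ℕ) := by
  set A : Fin n := ⟨a, ha⟩ with hA
  set t : ℕ := (τ A : ℕ) with hT
  have hat : a ≤ t := start_le τ hτ ha hB
  -- lower bound on τ m
  have hlo : ∀ m : Fin n, a ≤ (m : ℕ) → a ≤ (τ m : ℕ) := by
    intro m hm
    by_contra h
    push_neg at h
    have := hB (τ m) h
    rw [hτ m] at this
    omega
  -- upper bound on τ m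
  have hub : ∀ m : Fin n, a ≤ (m : ℕ) → (m : ℕ) ≤ t → (τ m : ℕ) ≤ t := by
    intro m hm1 hm2
    by_contra h
    push_neg at h
    -- m ≠ a and m ≠ t
    have hma : a < (m : ℕ) := by
      rcases eq_or_lt_of_le hm1 with he | hl
      · exfalso
        have : m = A := Fin.ext he.symm
        rw [this] at h
        omega
      · exact hl
    have hmt : (m : ℕ) < t := by
      rcases eq_or_lt_of_le hm2 with he | hl
      · exfalso
        have : m = τ A := Fin.ext (by simpa [hT] using he)
        rw [this, hτ A] at h
        simp [hA] at h
        omega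
      · exact hl
    refine hav ⟨m, τ A, τ m, ?_, ?_, ?_, ?_⟩
    · exact Fin.lt_def.mpr (by omega)
    · exact Fin.lt_def.mpr (by omega)
    · rw [hτ A, hτ m]
      exact Fin.lt_def.mpr (by simp [hA]; omega)
    · rw [hτ m]
      exact Fin.lt_def.mpr (by omega)
  -- strictly decreasing on [a, t]
  have hanti : ∀ j k : Fin n, a ≤ (j : ℕ) → (k : ℕ) ≤ t → j < k → (τ k : ℕ) < (τ j : ℕ) := by
    intro j k hj hk hjk
    have hjk' : (j : ℕ) < (k : ℕ) := hjk
    have hne : (τ j : ℕ) ≠ (τ k : ℕ) := by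
      intro he
      have : τ j = τ k := Fin.ext he
      have : j = k := τ.injective this
      omega
    rcases lt_or_gt_of_ne hne with hl | hg
    · exfalso
      -- j ≠ a
      have hja : a < (j : ℕ) := by
        rcases eq_or_lt_of_le hj with he | h'
        · exfalso
          have : j = A := Fin.ext he.symm
          rw [this] at hl
          have hk' := hub k (by omega) hk
          rw [← hT] at hl
          omega
        · exact h'
      -- τ k ≠ t
      have hkt : (τ k : ℕ) < t := by
        have h1 := hub k (by omega) hk
        rcases eq_or_lt_of_le h1 with he | h'
        · exfalso
          have : τ k = τ A := Fin.ext (by simpa [hT] using he)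
          have : k = A := τ.injective this
          have : (k : ℕ) = a := by rw [this]
          omega
        · exact h'
      refine hav ⟨A, j, k, ?_, ?_, ?_, ?_⟩
      · exact Fin.lt_def.mpr (by simp [hA]; omega)
      · exact hjk
      · exact Fin.lt_def.mpr hl
      · exact Fin.lt_def.mpr (by rw [← hT]; exact hkt)
    · exact hg
  -- upper formula by induction on distance from a
  have hup : ∀ d : ℕ, ∀ m : Fin n, (m : ℕ) = a + d → (m : ℕ) ≤ t → (τ m : ℕ) + d ≤ t := by
    intro d
    induction d with
    | zero =>
      intro m hm _
      have : m = A := Fin.ext (by simp [hA]; omega)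
      rw [this, ← hT]
      omega
    | succ d ih =>
      intro m hm hmt
      have hd : a + d < n := by omega
      set m' : Fin n := ⟨a + d, hd⟩ with hm'
      have ih' := ih m' (by simp [hm']) (by simp [hm']; omega)
      have := hanti m' m (by simp [hm']) hmt (Fin.lt_def.mpr (by simp [hm']; omega))
      omega
  -- lower formula by induction on distance from t
  have hdown : ∀ d : ℕ, ∀ m : Fin n, (m : ℕ) + d = t → a ≤ (m : ℕ) → a + d ≤ (τ m : ℕ) := by
    intro d
    induction d with
    | zero =>
      intro m hm _
      have : m = τ A := Fin.ext (by rw [← hT]; omega)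
      rw [this, hτ A]
      simp [hA]
    | succ d ih =>
      intro m hm hma
      have hd : (m : ℕ) + 1 < n := by
        have := (τ A).isLt
        omega
      set m' : Fin n := ⟨(m : ℕ) + 1, hd⟩ with hm'
      have ih' := ih m' (by simp [hm']; omega) (by simp [hm']; omega)
      have := hanti m m' (by omega) (by simp [hm']; omega) (Fin.lt_def.mpr (by simp [hm']))
      omega
  intro m hm1 hm2
  have h1 := hup ((m : ℕ) - a) m (by omega) hm2
  have h2 := hdown (t - (m : ℕ)) m (by omega) hm1
  omega

/-- Breakpoint sequence. -/
def gseq (τ : Equiv.Perm (Fin n)) : ℕ → ℕ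
  | 0 => 0
  | i + 1 => if h : gseq τ i < n then (τ ⟨gseq τ i, h⟩ : ℕ) + 1 else gseq τ i

lemma gseq_invariant (τ : Equiv.Perm (Fin n)) (hτ : ∀ m, τ (τ m) = m) (hav : Av312 τ) :
    ∀ i, gseq τ i ≤ n ∧ ∀ m : Fin n, (m : ℕ) < gseq τ i → (τ m : ℕ) < gseq τ i := by
  intro i
  induction i with
  | zero => simp [gseq]
  | succ i ih =>
    obtain ⟨hle, hB⟩ := ih
    by_cases h : gseq τ i < n
    · have hcore := block_core τ hτ hav h hB
      have hge := start_le τ hτ h hB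
      have ht := (τ ⟨gseq τ i, h⟩).isLt
      constructor
      · simp only [gseq, dif_pos h]
        omega
      · intro m hm
        simp only [gseq, dif_pos h] at hm ⊢
        by_cases hma : (m : ℕ) < gseq τ i
        · have := hB m hma
          omega
        · push_neg at hma
          have := hcore m hma (by omega)
          omega
    · constructor
      · simp only [gseq, dif_neg h]; exact hle
      · intro m hm
        simp only [gseq, dif_neg h] at hm ⊢
        exact hB m hm

lemma gseq_reaches (τ : Equiv.Perm (Fin n)) (hτ : ∀ m, τ (τ m) = m) (hav : Av312 τ) :
    gseq τ n = n := by
  have key : ∀ i, gseq τ i = n ∨ i ≤ gseq τ i := by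
    intro i
    induction i with
    | zero => right; simp [gseq]
    | succ i ih =>
      by_cases h : gseq τ i < n
      · right
        have hB := (gseq_invariant τ hτ hav i).2
        have hge := start_le τ hτ h hB
        simp only [gseq, dif_pos h]
        rcases ih with h' | h'
        · omega
        · omega
      · left
        have hle := (gseq_invariant τ hτ hav i).1
        have : gseq τ i = n := by omega
        simp [gseq, h, this]
  rcases key n with h | h
  · exact h
  · have := (gseq_invariant τ hτ hav n).1
    omega

end aux

theorem av312_iff_decreasing_blocks {n : ℕ} (τ : Equiv.Perm (Fin n)) (hτ : τ * τ = 1) :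
    Av312 τ ↔
      ∃ (p : ℕ) (k : Fin (p + 1) → ℕ), StrictMono k ∧ k 0 = 0 ∧ k (Fin.last p) = n ∧
        ∀ (j : Fin p) (m : Fin n), k j.castSucc ≤ (m : ℕ) → (m : ℕ) < k j.succ →
          (τ m : ℕ) + (m : ℕ) + 1 = k j.castSucc + k j.succ := by
  have hτ' : ∀ m, τ (τ m) = m := inv_pt τ hτ
  constructor
  · intro hav
    have hex : ∃ i, gseq τ i = n := ⟨n, gseq_reaches τ hτ' hav⟩
    set p := Nat.find hex with hp
    refine ⟨p, fun i => gseq τ (i : ℕ), ?_, ?_, ?_, ?_⟩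
    · rw [Fin.strictMono_iff_lt_succ]
      intro i
      have hi : (i : ℕ) < p := i.isLt
      have hne : gseq τ (i : ℕ) ≠ n := Nat.find_min hex hi
      have hle := (gseq_invariant τ hτ' hav (i : ℕ)).1
      have h : gseq τ (i : ℕ) < n := by omega
      have hB := (gseq_invariant τ hτ' hav (i : ℕ)).2
      have hge := start_le τ hτ' h hB
      simp only [Fin.coe_castSucc, Fin.val_succ]
      simp only [gseq, dif_pos h]
      omega
    · simp [gseq]
    · simp only [Fin.val_last]
      exact Nat.find_spec hex
    · intro j m hm1 hm2
      have hj : (j : ℕ) < p := j.isLt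
      have hne : gseq τ (j : ℕ) ≠ n := Nat.find_min hex hj
      have hle := (gseq_invariant τ hτ' hav (j : ℕ)).1
      have h : gseq τ (j : ℕ) < n := by omega
      have hB := (gseq_invariant τ hτ' hav (j : ℕ)).2
      have hcore := block_core τ hτ' hav h hB
      simp only [Fin.coe_castSucc, Fin.val_succ] at hm1 hm2 ⊢
      simp only [gseq, dif_pos h] at hm2 ⊢
      have := hcore m hm1 (by omega)
      omega
  · rintro ⟨p, k, hmono, h0, hlast, hblk⟩ ⟨i, j, l, hij, hjl, h1, h2⟩
    -- block locator
    have hloc : ∀ m : Fin n, ∃ c : ℕ, ∃ hc : c < p,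
        k ⟨c, by omega⟩ ≤ (m : ℕ) ∧ (m : ℕ) < k ⟨c + 1, by omega⟩ ∧
        k ⟨c, by omega⟩ ≤ (τ m : ℕ) ∧ (τ m : ℕ) < k ⟨c + 1, by omega⟩ := by
      intro m
      have hexm : ∃ b, ∃ hb : b < p + 1, (m : ℕ) < k ⟨b, hb⟩ := by
        refine ⟨p, by omega, ?_⟩
        have : (⟨p, by omega⟩ : Fin (p + 1)) = Fin.last p := rfl
        rw [this, hlast]
        exact m.isLt
      have hnot0 : ¬ ∃ hb : (0 : ℕ) < p + 1, (m : ℕ) < k ⟨0, hb⟩ := by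
        push_neg
        intro hb
        have : (⟨0, hb⟩ : Fin (p + 1)) = 0 := rfl
        rw [this, h0]
        omega
      have hpos : 0 < Nat.find hexm :=
        Nat.pos_of_ne_zero (fun h => hnot0 (h ▸ Nat.find_spec hexm))
      obtain ⟨c, hceq⟩ : ∃ c, Nat.find hexm = c + 1 :=
        ⟨Nat.find hexm - 1, by omega⟩
      have hfind := Nat.find_spec hexm
      rw [hceq] at hfind
      obtain ⟨hblt, hmb⟩ := hfind
      have hcp : c < p := by omega
      have hnc := Nat.find_min hexm (show c < Nat.find hexm by omega)
      push_neg at hnc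
      have hcm : k ⟨c, by omega⟩ ≤ (m : ℕ) := hnc (by omega)
      have hfm : (τ m : ℕ) + (m : ℕ) + 1 = k ⟨c, by omega⟩ + k ⟨c + 1, by omega⟩ := by
        have := hblk ⟨c, hcp⟩ m
        simp only [Fin.castSucc_mk, Fin.succ_mk] at this
        exact this hcm hmb
      refine ⟨c, hcp, hcm, hmb, by omega, by omega⟩
    obtain ⟨ci, hci, hi1, hi2, hi3, hi4⟩ := hloc i
    obtain ⟨cj, hcj, hj1, hj2, hj3, hj4⟩ := hloc j
    obtain ⟨cl, hcl, hl1, hl2, hl3, hl4⟩ := hloc l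
    have hij' : (i : ℕ) < (j : ℕ) := hij
    have hjl' : (j : ℕ) < (l : ℕ) := hjl
    have h1' : (τ j : ℕ) < (τ l : ℕ) := h1
    have h2' : (τ l : ℕ) < (τ i : ℕ) := h2
    have hmono' : ∀ b b' : ℕ, ∀ hb : b < p + 1, ∀ hb' : b' < p + 1, b ≤ b' →
        k ⟨b, hb⟩ ≤ k ⟨b', hb'⟩ := by
      intro b b' hb hb' hle
      exact hmono.monotone (by exact Fin.mk_le_mk.mpr hle)
    -- cj < cl
    have hcjl : cj < cl := by
      rcases lt_trichotomy cj cl with h | h | h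
      · exact h
      · exfalso
        subst h
        have hfj : (τ j : ℕ) + (j : ℕ) + 1 = k ⟨cj, by omega⟩ + k ⟨cj + 1, by omega⟩ := by
          have := hblk ⟨cj, hcj⟩ j
          simp only [Fin.castSucc_mk, Fin.succ_mk] at this
          exact this hj1 hj2
        have hfl : (τ l : ℕ) + (l : ℕ) + 1 = k ⟨cj, by omega⟩ + k ⟨cj + 1, by omega⟩ := by
          have := hblk ⟨cj, hcl⟩ l
          simp only [Fin.castSucc_mk, Fin.succ_mk] at this
          exact this hl1 hl2
        omega
      · exfalso
        have := hmono' (cl + 1) cj (by omega) (by omega) (by omega)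
        omega
    -- ci ≤ cj
    have hcij : ci ≤ cj := by
      by_contra h
      push_neg at h
      have := hmono' (cj + 1) ci (by omega) (by omega) (by omega)
      omega
    -- cl ≤ ci
    have hcli : cl ≤ ci := by
      by_contra h
      push_neg at h
      have := hmono' (ci + 1) cl (by omega) (by omega) (by omega)
      omega
    omega
end

section
/- For every n, the number of involutions of {1,...,n} avoiding both 4321 and 132 equals 1 + ⌊n/2⌋·⌈n/2⌉. -/
def Av132 {n : ℕ} (σ : Equiv.Perm (Fin n)) : Prop :=
  ¬ ∃ i j k : Fin n, i < j ∧ j < k ∧ σ i < σ k ∧ σ k < σ j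

def sfun (k m i : ℕ) : ℕ :=
  if i < k then i + m else if m ≤ i ∧ i < m + k then i - m else i

lemma sfun_lt {n k m i : ℕ} (hi : i < n) (h : m + k ≤ n) : sfun k m i < n := by
  unfold sfun; split_ifs <;> omega

lemma sfun_invol {k m : ℕ} (hkm : k ≤ m) (i : ℕ) : sfun k m (sfun k m i) = i := by
  unfold sfun; split_ifs <;> omega

def sperm (n k m : ℕ) (hkm : k ≤ m) (h : m + k ≤ n) : Equiv.Perm (Fin n) :=
  Function.Involutive.toPerm (fun i => ⟨sfun k m i.1, sfun_lt i.2 h⟩)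
    (fun i => Fin.ext (sfun_invol hkm i.1))

lemma sperm_apply (n k m : ℕ) (hkm : k ≤ m) (h : m + k ≤ n) (i : Fin n) :
    (sperm n k m hkm h i).1 = sfun k m i.1 := rfl

lemma sperm_av132 (n k m : ℕ) (hkm : k ≤ m) (h : m + k ≤ n) : Av132 (sperm n k m hkm h) := by
  rintro ⟨i, j, l, hij, hjl, h1, h2⟩
  rw [Fin.lt_def] at hij hjl h1 h2
  rw [sperm_apply, sperm_apply] at h1 h2
  unfold sfun at h1 h2
  split_ifs at h1 h2 <;> omega

lemma sperm_av4321 (n k m : ℕ) (hkm : k ≤ m) (h : m + k ≤ n) : Av4321 (sperm n k m hkm h) := by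
  rintro ⟨i, j, l, p, hij, hjl, hlp, h1, h2, h3⟩
  rw [Fin.lt_def] at hij hjl hlp h1 h2 h3
  rw [sperm_apply, sperm_apply] at h1 h2 h3
  unfold sfun at h1 h2 h3
  split_ifs at h1 h2 h3 <;> omega

lemma sperm_invol (n k m : ℕ) (hkm : k ≤ m) (h : m + k ≤ n) :
    sperm n k m hkm h * sperm n k m hkm h = 1 := by
  ext i
  simp only [Equiv.Perm.mul_apply, Equiv.Perm.one_apply]
  have : ((sperm n k m hkm h) ((sperm n k m hkm h) i)).1 = i.1 := by
    rw [sperm_apply, sperm_apply]; exact sfun_invol hkm i.1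
  exact this

def Tset (n : ℕ) : Finset (ℕ × ℕ) :=
  (Finset.range (n+1) ×ˢ Finset.range (n+1)).filter
    (fun p => 1 ≤ p.1 ∧ p.1 ≤ p.2 ∧ p.2 + p.1 ≤ n)

lemma mem_Tset {n : ℕ} (p : ℕ × ℕ) :
    p ∈ Tset n ↔ 1 ≤ p.1 ∧ p.1 ≤ p.2 ∧ p.2 + p.1 ≤ n := by
  simp only [Tset, Finset.mem_filter, Finset.mem_product, Finset.mem_range]
  omega

lemma Tset_card (n : ℕ) : (Tset n).card = n / 2 * ((n + 1) / 2) := by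
  induction n with
  | zero => decide
  | succ n ih =>
    have hdecomp : Tset (n+1) =
        Tset n ∪ (Finset.Icc 1 ((n+1)/2)).image (fun k => (k, n+1-k)) := by
      ext p
      simp only [mem_Tset, Finset.mem_union, Finset.mem_image, Finset.mem_Icc]
      constructor
      · rintro ⟨h1, h2, h3⟩
        rcases Nat.lt_or_ge (p.2 + p.1) (n+1) with h | h
        · exact Or.inl ⟨h1, h2, by omega⟩
        · refine Or.inr ⟨p.1, by omega, ?_⟩
          obtain ⟨a, b⟩ := p
          simp only [Prod.mk.injEq]
          refine ⟨trivial, ?_⟩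
          simp at h1 h2 h3 h ⊢; omega
      · rintro (⟨h1, h2, h3⟩ | ⟨k, hk, rfl⟩)
        · exact ⟨h1, h2, by omega⟩
        · simp; omega
    have hdisj : Disjoint (Tset n) ((Finset.Icc 1 ((n+1)/2)).image (fun k => (k, n+1-k))) := by
      rw [Finset.disjoint_left]
      intro p hp hq
      rw [mem_Tset] at hp
      simp only [Finset.mem_image, Finset.mem_Icc] at hq
      obtain ⟨k, hk, rfl⟩ := hq
      simp at hp; omega
    have hinj : Set.InjOn (fun k => (k, n+1-k)) (Finset.Icc 1 ((n+1)/2)) := by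
      intro a _ b _ h
      exact congrArg Prod.fst h
    rw [hdecomp, Finset.card_union_of_disjoint hdisj, ih, Finset.card_image_of_injOn hinj,
      Nat.card_Icc]
    have h1 : (n+1+1)/2 = n/2 + 1 := by omega
    have h2 : (n+1)/2 + 1 - 1 = (n+1)/2 := by omega
    rw [h1, h2]
    ring

def tf {n : ℕ} (τ : Equiv.Perm (Fin n)) (a : ℕ) : ℕ :=
  if h : a < n then (τ ⟨a, h⟩).1 else a

lemma tf_eq {n : ℕ} (τ : Equiv.Perm (Fin n)) {a : ℕ} (ha : a < n) :
    tf τ a = (τ ⟨a, ha⟩).1 := dif_pos ha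

lemma tf_lt {n : ℕ} (τ : Equiv.Perm (Fin n)) {a : ℕ} (ha : a < n) : tf τ a < n := by
  rw [tf_eq τ ha]; exact (τ ⟨a, ha⟩).2

lemma perm_invol {n : ℕ} {τ : Equiv.Perm (Fin n)} (hτ : τ * τ = 1) (i : Fin n) :
    τ (τ i) = i := by
  rw [← Equiv.Perm.mul_apply, hτ, Equiv.Perm.one_apply]

lemma tf_invol {n : ℕ} {τ : Equiv.Perm (Fin n)} (hτ : τ * τ = 1) (a : ℕ) :
    tf τ (tf τ a) = a := by
  by_cases ha : a < n
  · rw [tf_eq τ ha, tf_eq τ (τ ⟨a, ha⟩).2]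
    have := perm_invol hτ ⟨a, ha⟩
    calc (τ ⟨(τ ⟨a, ha⟩).1, (τ ⟨a, ha⟩).2⟩).1 = (τ (τ ⟨a, ha⟩)).1 := rfl
      _ = a := by rw [this]
  · have h1 : tf τ a = a := dif_neg ha
    rw [h1, h1]

lemma tf_inj {n : ℕ} {τ : Equiv.Perm (Fin n)} (hτ : τ * τ = 1) {a b : ℕ}
    (h : tf τ a = tf τ b) : a = b := by
  have := congrArg (tf τ) h
  rwa [tf_invol hτ, tf_invol hτ] at this

lemma pat132 {n : ℕ} {τ : Equiv.Perm (Fin n)} (h3 : Av132 τ) {a b c : ℕ}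
    (hab : a < b) (hbc : b < c) (hcn : c < n)
    (h1 : tf τ a < tf τ c) (h2 : tf τ c < tf τ b) : False := by
  have han : a < n := by omega
  have hbn : b < n := by omega
  rw [tf_eq τ han, tf_eq τ hcn] at h1
  rw [tf_eq τ hcn, tf_eq τ hbn] at h2
  exact h3 ⟨⟨a, han⟩, ⟨b, hbn⟩, ⟨c, hcn⟩, Fin.mk_lt_mk.mpr hab, Fin.mk_lt_mk.mpr hbc, h1, h2⟩

lemma pat4321 {n : ℕ} {τ : Equiv.Perm (Fin n)} (h4 : Av4321 τ) {a b c d : ℕ}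
    (hab : a < b) (hbc : b < c) (hcd : c < d) (hdn : d < n)
    (h1 : tf τ d < tf τ c) (h2 : tf τ c < tf τ b) (h3 : tf τ b < tf τ a) : False := by
  have han : a < n := by omega
  have hbn : b < n := by omega
  have hcn : c < n := by omega
  rw [tf_eq τ hdn, tf_eq τ hcn] at h1
  rw [tf_eq τ hcn, tf_eq τ hbn] at h2
  rw [tf_eq τ hbn, tf_eq τ han] at h3
  exact h4 ⟨⟨a, han⟩, ⟨b, hbn⟩, ⟨c, hcn⟩, ⟨d, hdn⟩, Fin.mk_lt_mk.mpr hab,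
    Fin.mk_lt_mk.mpr hbc, Fin.mk_lt_mk.mpr hcd, h1, h2, h3⟩

lemma char {n : ℕ} {τ : Equiv.Perm (Fin n)} (hτ : τ * τ = 1)
    (h4 : Av4321 τ) (h3 : Av132 τ) (hne : τ ≠ 1) :
    ∃ k m : ℕ, 1 ≤ k ∧ k ≤ m ∧ m + k ≤ n ∧ ∀ a, a < n → tf τ a = if a < k then a + m else if m ≤ a ∧ a < m + k then a - m else a := by
  set t := tf τ with ht
  have hinv : ∀ a, t (t a) = a := tf_invol hτ
  have hlt : ∀ {a}, a < n → t a < n := fun h => tf_lt τ h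
  have P3 : ∀ {a b c : ℕ}, a < b → b < c → c < n → t a < t c → t c < t b → False :=
    fun hab hbc hcn h1 h2 => pat132 h3 hab hbc hcn h1 h2
  have P4 : ∀ {a b c d : ℕ}, a < b → b < c → c < d → d < n →
      t d < t c → t c < t b → t b < t a → False :=
    fun hab hbc hcd hdn h1 h2 hh3 => pat4321 h4 hab hbc hcd hdn h1 h2 hh3
  have L1 : ∀ f a, t f = f → a < n → a < t a → f < a → False := by
    intro f a hf han ha hfa
    exact P3 hfa ha (hlt han) (by rw [hf, hinv]; omega) (by rw [hinv]; omega)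
  have L2 : ∀ a b, a < t a → b < n → b < t b → a < b → t a < b → False := by
    intro a b ha hbn hb hab htab
    refine P3 htab hb (hlt hbn) ?_ ?_
    · rw [hinv, hinv]; omega
    · rw [hinv]; omega
  have tinj : ∀ {a b : ℕ}, t a = t b → a = b := fun h => tf_inj hτ h
  have L3 : ∀ a b, a < n → b < n → a < t a → b < t b → a < b → t a < t b := by
    intro a b han hbn ha hb hab
    by_contra hcon
    push_neg at hcon
    have hne2 : t b ≠ t a := fun h => by have := tinj h; omega
    have hblta : t b < t a := by omega
    refine P4 hab hb hblta (hlt han) ?_ ?_ ?_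
    · rw [hinv, hinv]; omega
    · rw [hinv]; omega
    · omega
  have L4 : ∀ a c, a < n → a < t a → c < a → c < t c := by
    intro a c han ha hca
    have hcn : c < n := by omega
    rcases lt_trichotomy (t c) c with h | h | h
    · exfalso
      have h1 : t c < t (t c) := by rw [hinv]; omega
      exact L2 (t c) a h1 han ha (by omega) (by rw [hinv]; omega)
    · exact absurd (L1 c a h han ha hca) id
    · exact h
  have hex : ∃ a, a < n ∧ a < t a := by
    have hex0 : ∃ i : Fin n, τ i ≠ i := by
      by_contra hc
      push_neg at hc
      exact hne (Equiv.ext fun i => hc i)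
    obtain ⟨i, hi⟩ := hex0
    have h1 : t i.1 ≠ i.1 := by
      rw [ht, tf_eq τ i.2]
      intro h; exact hi (Fin.ext (by simpa using h))
    rcases lt_or_gt_of_ne h1 with h | h
    · exact ⟨t i.1, hlt i.2, by rw [hinv]; exact h⟩
    · exact ⟨i.1, i.2, h⟩
  have hexk : ∃ c, ¬ (c < n ∧ c < t c) := ⟨n, fun h => by omega⟩
  set k := Nat.find hexk with hk
  have hkA : ∀ c, c < k → c < n ∧ c < t c := fun c hc => of_not_not (Nat.find_min hexk hc)
  have hkspec : ¬ (k < n ∧ k < t k) := Nat.find_spec hexk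
  have hAk : ∀ c, c < n → c < t c → c < k := by
    intro c hcn hc
    by_contra hcon
    push_neg at hcon
    rcases eq_or_lt_of_le hcon with h | h
    · exact hkspec (h ▸ ⟨hcn, hc⟩)
    · exact hkspec ⟨by omega, L4 c k hcn hc h⟩
  have hk1 : 1 ≤ k := by
    obtain ⟨a, han, ha⟩ := hex
    have := hAk a han ha; omega
  have h0A : 0 < n ∧ 0 < t 0 := hkA 0 hk1
  set m := t 0 with hm
  have hm0 : 0 < m := h0A.2
  have hmn : m < n := hlt h0A.1
  have hkm : k ≤ m := by
    by_contra hcon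
    push_neg at hcon
    have := (hkA m hcon).2
    rw [hm, hinv] at this
    omega
  have hstep : ∀ i, i < k → t i = m + i := by
    intro i
    induction i with
    | zero => intro _; omega
    | succ i ih =>
      intro hik
      have hik' : i < k := by omega
      have hti : t i = m + i := ih hik'
      obtain ⟨hi1n, hi1⟩ := hkA (i+1) hik
      have hin : i < n := by omega
      have hb : m + i < t (i+1) := by
        have := L3 i (i+1) hin hi1n (by omega) hi1 (by omega)
        omega
      by_contra hcon
      have hbig : m + i + 1 < t (i+1) := by omega
      set b := t (i+1) with hbdef
      set c := m + i + 1 with hcdef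
      have hbn : b < n := hlt hi1n
      have hcn : c < n := by omega
      have hcm : k ≤ c := by omega
      have hcfix : t c = c := by
        rcases lt_trichotomy (t c) c with h | h | h
        · exfalso
          set a' := t c with ha'
          have ha'A : a' < t a' := by rw [ha', hinv]; omega
          have ha'n : a' < n := hlt hcn
          have ha'k : a' < k := hAk a' ha'n ha'A
          have h5 : t a' = c := by rw [ha', hinv]
          rcases lt_trichotomy a' (i+1) with h2 | h2 | h2
          · rcases lt_or_eq_of_le (by omega : a' ≤ i) with h6 | h6
            · have := L3 a' i ha'n hin ha'A (by omega) h6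
              omega
            · rw [h6, hti] at h5; omega
          · rw [h2] at h5; omega
          · have := L3 (i+1) a' hi1n ha'n hi1 ha'A h2
            omega
        · exact h
        · exfalso
          have := hAk c hcn h
          omega
      have hv1 : t (m + i) = i := by rw [← hti, hinv]
      have hv2 : t b = i + 1 := by rw [hbdef, hinv]
      exact P3 (by omega : m + i < c) (by omega : c < b) hbn
        (by rw [hv1, hv2]; omega) (by rw [hv2, hcfix]; omega)
  have hmkn : m + k ≤ n := by
    have := hlt (hkA (k-1) (by omega)).1
    rw [hstep (k-1) (by omega)] at this
    omega
  refine ⟨k, m, hk1, hkm, hmkn, ?_⟩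
  intro a han
  split_ifs with h1 h2
  · rw [hstep a h1, Nat.add_comm]
  · obtain ⟨hma, hamk⟩ := h2
    have hj : a - m < k := by omega
    have h5 := hstep (a - m) hj
    calc t a = t (t (a - m)) := by rw [h5]; congr 1; omega
      _ = a - m := hinv _
  · push_neg at h2
    rcases lt_trichotomy (t a) a with h | h | h
    · exfalso
      have ha'A : t a < t (t a) := by rw [hinv]; omega
      have ha'n : t a < n := hlt han
      have ha'k : t a < k := hAk (t a) ha'n ha'A
      have h5 : t (t a) = a := hinv a
      rw [hstep (t a) ha'k] at h5
      omega
    · exact h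
    · exact absurd (hAk a han h) (by omega)

lemma one_mem {n : ℕ} : (1 : Equiv.Perm (Fin n)) * 1 = 1 ∧ Av4321 (1 : Equiv.Perm (Fin n)) ∧ Av132 (1 : Equiv.Perm (Fin n)) := by
  refine ⟨one_mul 1, ?_, ?_⟩
  · rintro ⟨i, j, k, l, hij, hjk, hkl, h1, h2, h3⟩
    simp only [Equiv.Perm.one_apply] at h1 h2 h3
    exact absurd h1 (not_lt.mpr hkl.le)
  · rintro ⟨i, j, k, hij, hjk, h1, h2⟩
    simp only [Equiv.Perm.one_apply] at h1 h2
    exact absurd h2 (not_lt.mpr hjk.le)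

theorem card_involutions_avoiding_4321_132 (n : ℕ) :
    Nat.card {τ : Equiv.Perm (Fin n) // τ * τ = 1 ∧ Av4321 τ ∧ Av132 τ} =
      1 + (n / 2) * ((n + 1) / 2) := by
  classical
  have hc : ∀ q : {p : ℕ × ℕ // p ∈ Tset n},
      1 ≤ q.1.1 ∧ q.1.1 ≤ q.1.2 ∧ q.1.2 + q.1.1 ≤ n := fun q => (mem_Tset _).1 q.2
  let f : Option {p : ℕ × ℕ // p ∈ Tset n} →
      {τ : Equiv.Perm (Fin n) // τ * τ = 1 ∧ Av4321 τ ∧ Av132 τ} := fun o =>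
    o.elim ⟨1, one_mem⟩ (fun q =>
      ⟨sperm n q.1.1 q.1.2 (hc q).2.1 (hc q).2.2,
        sperm_invol _ _ _ _ _, sperm_av4321 _ _ _ _ _, sperm_av132 _ _ _ _ _⟩)
  have hval : ∀ q : {p : ℕ × ℕ // p ∈ Tset n}, ∀ i : Fin n,
      ((f (some q)).1 i).1 = sfun q.1.1 q.1.2 i.1 := fun q i => rfl
  have hne_one : ∀ q : {p : ℕ × ℕ // p ∈ Tset n}, (f (some q)).1 ≠ 1 := by
    intro q h
    have hq := hc q
    have h0 : (0 : ℕ) < n := by omega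
    have h2 : ((f (some q)).1 ⟨0, h0⟩).1 = ((1 : Equiv.Perm (Fin n)) ⟨0, h0⟩).1 := by rw [h]
    have h3 : sfun (q.1).1 (q.1).2 0 = 0 := h2
    unfold sfun at h3
    split_ifs at h3 <;> omega
  have hbij : Function.Bijective f := by
    constructor
    · rintro (_ | q1) (_ | q2) h
      · rfl
      · exact absurd (congrArg Subtype.val h).symm (hne_one q2)
      · exact absurd (congrArg Subtype.val h) (hne_one q1)
      · have hq1 := hc q1
        have hq2 := hc q2
        have hv : ∀ a : ℕ, a < n → sfun q1.1.1 q1.1.2 a = sfun q2.1.1 q2.1.2 a := by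
          intro a ha
          have h2 : ((f (some q1)).1 ⟨a, ha⟩).1 = ((f (some q2)).1 ⟨a, ha⟩).1 := by rw [h]
          rw [hval q1 ⟨a, ha⟩, hval q2 ⟨a, ha⟩] at h2
          exact h2
        have h0 : (0 : ℕ) < n := by omega
        have hm : q1.1.2 = q2.1.2 := by
          have := hv 0 h0
          unfold sfun at this
          split_ifs at this <;> omega
        have hk : q1.1.1 = q2.1.1 := by
          by_contra hkk
          rcases Nat.lt_or_ge q1.1.1 q2.1.1 with hlt | hge
          · have hkn : q1.1.1 < n := by omega
            have := hv q1.1.1 hkn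
            unfold sfun at this
            split_ifs at this <;> omega
          · have hlt2 : q2.1.1 < q1.1.1 := by omega
            have hkn : q2.1.1 < n := by omega
            have := hv q2.1.1 hkn
            unfold sfun at this
            split_ifs at this <;> omega
        congr 1
        exact Subtype.ext (Prod.ext hk hm)
    · rintro ⟨σ, hσ1, hσ4, hσ3⟩
      by_cases hσ : σ = 1
      · exact ⟨none, Subtype.ext hσ.symm⟩
      · obtain ⟨k, m, hk1, hkm, hmkn, heq⟩ := char hσ1 hσ4 hσ3 hσ
        refine ⟨some ⟨(k, m), (mem_Tset _).2 ⟨hk1, hkm, hmkn⟩⟩, ?_⟩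
        apply Subtype.ext
        apply Equiv.ext
        intro i
        apply Fin.ext
        rw [hval]
        have hs : (σ i).1 = sfun k m i.1 := by
          rw [← tf_eq σ i.2, heq i.1 i.2]; rfl
        exact hs.symm
  have hcard := Nat.card_eq_of_bijective f hbij
  rw [← hcard, Nat.card_eq_fintype_card, Fintype.card_option, Fintype.card_coe, Tset_card]
  omega
end

section
/- An involution avoids 4321 and 312 if and only if it avoids 4321 and 231; moreover the number of involutions of {1,...,n} avoiding both 4321 and 312 equals t_{n+2}, where (t_n) is the Tribonacci sequence defined by t_0 = 0, t_1 = 0, t_2 = 1, and t_{n+3} = t_{n+2} + t_{n+1} + t_n. -/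
def Av231 {n : ℕ} (σ : Equiv.Perm (Fin n)) : Prop :=
  ¬ ∃ i j k : Fin n, i < j ∧ j < k ∧ σ k < σ i ∧ σ i < σ j

def trib : ℕ → ℕ
  | 0 => 0
  | 1 => 0
  | 2 => 1
  | (n + 3) => trib (n + 2) + trib (n + 1) + trib n


/-!
An occurrence of 312 or 4321 in a direct sum `π ⊕ σ` lies inside one summand, because both
patterns begin with their largest entry. In an involution avoiding 312 and 4321 the first entry
is at most 2, and the first block is then the reversal of length `τ 0 + 1`. Hence the
involutions of length `n + 3` are exactly `rev_k ⊕ σ` with `k ∈ {1, 2, 3}` and `σ` such an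
involution of length `n + 3 - k`, which is the Tribonacci recursion. The equivalence with
231-avoidance holds because 231 is the inverse of 312.
-/

open Equiv Function Set

section Patterns

variable {α β : Type*} [LinearOrder α] [LinearOrder β] {j : ℕ}

-- `p` is a pattern in one-line notation (`![2, 0, 1]` is 312); `e` locates an occurrence.
def ContainsPattern (τ : Perm α) (p : Fin j → Fin j) : Prop :=
  ∃ e : Fin j → α, StrictMono e ∧ ∀ a b, p a < p b → τ (e a) < τ (e b)

variable {τ : Perm α} {σ : Perm β} {f : β → α} {p : Fin j → Fin j}

theorem ContainsPattern.map (hf : StrictMono f) (hfτ : ∀ x, τ (f x) = f (σ x))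
    (h : ContainsPattern σ p) : ContainsPattern τ p := by
  obtain ⟨e, he, hp⟩ := h
  exact ⟨f ∘ e, hf.comp he, fun a b hab => by simpa [hfτ, hf.lt_iff_lt] using hp a b hab⟩

theorem containsPattern_of_forall_mem_range (hf : StrictMono f) (hfτ : ∀ x, τ (f x) = f (σ x))
    {e : Fin j → α} (he : StrictMono e) (hp : ∀ a b, p a < p b → τ (e a) < τ (e b))
    (hrange : ∀ a, e a ∈ range f) : ContainsPattern σ p := by
  choose e' he' using hrange
  refine ⟨e', fun a b hab => ?_, fun a b hab => ?_⟩
  · rw [← hf.lt_iff_lt, he', he']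
    exact he hab
  · rw [← hf.lt_iff_lt, ← hfτ, ← hfτ, he', he']
    exact hp a b hab

end Patterns

section DirectSum

variable {k m : ℕ} (π : Perm (Fin k)) (σ : Perm (Fin m))

def directSum : Perm (Fin (k + m)) :=
  finSumFinEquiv.permCongr (π.sumCongr σ)

@[simp]
theorem directSum_castAdd (i : Fin k) : directSum π σ (Fin.castAdd m i) = Fin.castAdd m (π i) := by
  simp [directSum]

@[simp]
theorem directSum_natAdd (i : Fin m) : directSum π σ (Fin.natAdd k i) = Fin.natAdd k (σ i) := by
  simp [directSum]

theorem directSum_mul (π' : Perm (Fin k)) (σ' : Perm (Fin m)) :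
    directSum π σ * directSum π' σ' = directSum (π * π') (σ * σ') := by
  ext x
  induction x using Fin.addCases <;> simp

theorem directSum_one : directSum (1 : Perm (Fin k)) (1 : Perm (Fin m)) = 1 := by
  ext x
  induction x using Fin.addCases <;> simp

theorem directSum_right_injective : Injective (directSum (m := m) π) := by
  intro σ σ' h
  refine Equiv.ext fun i => ?_
  simpa using congrArg (· (Fin.natAdd k i)) h

theorem val_directSum_lt_iff (x : Fin (k + m)) : (directSum π σ x : ℕ) < k ↔ (x : ℕ) < k := by
  induction x using Fin.addCases <;> simp

variable {π σ}

theorem exists_directSum_eq {τ : Perm (Fin (k + m))}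
    (h : ∀ i, τ (Fin.castAdd m i) = Fin.castAdd m (π i)) : ∃ σ, directSum π σ = τ := by
  have hinl : MapsTo (finSumFinEquiv.symm.permCongr τ) (range Sum.inl) (range Sum.inl) := by
    rintro _ ⟨i, rfl⟩
    exact ⟨π i, by simp [h]⟩
  obtain ⟨⟨π', σ⟩, hτ⟩ := Perm.mem_sumCongrHom_range_of_perm_mapsTo_inl hinl
  refine ⟨σ, ?_⟩
  ext x
  induction x using Fin.addCases with
  | left i => simp [h]
  | right i =>
    have hi : Sum.inr (σ i) = finSumFinEquiv.symm (τ (Fin.natAdd k i)) := by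
      simpa using congrArg (· (Sum.inr i)) hτ
    rw [directSum_natAdd, ← finSumFinEquiv_apply_right, hi, Equiv.apply_symm_apply]

theorem containsPattern_directSum_iff {j : ℕ} {p : Fin (j + 1) → Fin (j + 1)}
    (hp : ∀ a ≠ 0, p a < p 0) :
    ContainsPattern (directSum π σ) p ↔ ContainsPattern π p ∨ ContainsPattern σ p := by
  refine ⟨fun ⟨e, he, hpe⟩ => ?_, ?_⟩
  · by_cases h0 : (e 0 : ℕ) < k
    · have hlt (a : Fin (j + 1)) : (e a : ℕ) < k := by
        rcases eq_or_ne a 0 with rfl | ha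
        · exact h0
        · rw [← val_directSum_lt_iff π σ] at h0 ⊢
          exact (Fin.lt_def.1 (hpe a 0 (hp a ha))).trans h0
      exact .inl <| containsPattern_of_forall_mem_range (Fin.strictMono_castAdd m)
        (directSum_castAdd π σ) he hpe fun a => ⟨⟨e a, hlt a⟩, rfl⟩
    · have hge (a : Fin (j + 1)) : k ≤ (e a : ℕ) :=
        (not_lt.1 h0).trans (he.monotone (Fin.zero_le a))
      exact .inr <| containsPattern_of_forall_mem_range (Fin.strictMono_natAdd k)
        (directSum_natAdd π σ) he hpe fun a => by rw [Fin.range_natAdd]; exact hge a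
  · rintro (h | h)
    · exact h.map (Fin.strictMono_castAdd m) (directSum_castAdd π σ)
    · exact h.map (Fin.strictMono_natAdd k) (directSum_natAdd π σ)

end DirectSum

section Avoidance

variable {n : ℕ} {τ : Perm (Fin n)}

theorem av312_iff_not_containsPattern : Av312 τ ↔ ¬ ContainsPattern τ ![2, 0, 1] := by
  refine not_congr ⟨fun ⟨i, j, k, hij, hjk, h1, h2⟩ => ?_, fun ⟨e, he, hp⟩ => ?_⟩
  · refine ⟨![i, j, k], Fin.strictMono_iff_lt_succ.2 fun a => by fin_cases a <;> assumption,
      fun a b hab => ?_⟩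
    fin_cases a <;> fin_cases b <;> simp at hab ⊢ <;> order
  · exact ⟨e 0, e 1, e 2, he (by decide), he (by decide), hp 1 2 (by decide), hp 2 0 (by decide)⟩

theorem av4321_iff_not_containsPattern : Av4321 τ ↔ ¬ ContainsPattern τ ![3, 2, 1, 0] := by
  refine not_congr ⟨fun ⟨i, j, k, l, hij, hjk, hkl, h1, h2, h3⟩ => ?_, fun ⟨e, he, hp⟩ => ?_⟩
  · refine ⟨![i, j, k, l], Fin.strictMono_iff_lt_succ.2 fun a => by fin_cases a <;> assumption,
      fun a b hab => ?_⟩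
    fin_cases a <;> fin_cases b <;> simp at hab ⊢ <;> order
  · exact ⟨e 0, e 1, e 2, e 3, he (by decide), he (by decide), he (by decide),
      hp 3 2 (by decide), hp 2 1 (by decide), hp 1 0 (by decide)⟩

theorem av231_iff_av312_inv : Av231 τ ↔ Av312 τ⁻¹ := by
  refine not_congr ⟨fun ⟨i, j, k, hij, hjk, h1, h2⟩ => ⟨τ k, τ i, τ j, h1, h2, ?_, ?_⟩,
    fun ⟨a, b, c, hab, hbc, h1, h2⟩ => ⟨τ⁻¹ b, τ⁻¹ c, τ⁻¹ a, h1, h2, ?_, ?_⟩⟩ <;> simpa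

theorem Av312.le_apply_of_lt (h : Av312 τ) (hτ : ∀ x, τ (τ x) = x)
    {p q : Fin n} (hpq : p < q) (hq : q < τ p) : p ≤ τ q := by
  by_contra! hlt
  exact h ⟨p, q, τ p, hpq, hq, by rwa [hτ], by rw [hτ]; exact hpq.trans hq⟩

end Avoidance

def avoidingInvolutions (n : ℕ) : Set (Perm (Fin n)) :=
  {τ | τ * τ = 1 ∧ Av4321 τ ∧ Av312 τ}

section Involutions

variable {k m : ℕ} {π : Perm (Fin k)} {σ : Perm (Fin m)}

theorem directSum_mem_avoidingInvolutions_iff (hπ : π ∈ avoidingInvolutions k) :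
    directSum π σ ∈ avoidingInvolutions (k + m) ↔ σ ∈ avoidingInvolutions m := by
  obtain ⟨hπ1, hπ4, hπ3⟩ := hπ
  simp only [avoidingInvolutions, mem_ofPred_eq, av4321_iff_not_containsPattern,
    av312_iff_not_containsPattern] at hπ4 hπ3 ⊢
  rw [directSum_mul, hπ1, ← directSum_one, (directSum_right_injective 1).eq_iff,
    containsPattern_directSum_iff (by decide), containsPattern_directSum_iff (by decide)]
  simp only [hπ4, hπ3, false_or]

theorem image_directSum_avoidingInvolutions (hπ : π ∈ avoidingInvolutions k) :
    directSum π '' avoidingInvolutions m =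
      {τ ∈ avoidingInvolutions (k + m) | ∀ i, τ (Fin.castAdd m i) = Fin.castAdd m (π i)} := by
  ext τ
  constructor
  · rintro ⟨σ, hσ, rfl⟩
    exact ⟨(directSum_mem_avoidingInvolutions_iff hπ).2 hσ, directSum_castAdd π σ⟩
  · rintro ⟨hτ, hπτ⟩
    obtain ⟨σ, rfl⟩ := exists_directSum_eq hπτ
    exact ⟨σ, (directSum_mem_avoidingInvolutions_iff hπ).1 hτ, rfl⟩

theorem revPerm_mem_avoidingInvolutions {n : ℕ} (hn : n ≤ 3) :
    Fin.revPerm ∈ avoidingInvolutions n := by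
  refine ⟨Equiv.ext Fin.rev_rev, ?_, fun ⟨_, j, k, _, hjk, hlt, _⟩ => ?_⟩
  · rintro ⟨i, j, k, l, hij, hjk, hkl, -⟩
    have := l.isLt
    simp only [Fin.lt_def] at hij hjk hkl
    omega
  · exact (Fin.rev_lt_rev.1 hlt).not_gt hjk

end Involutions

section FirstEntry

variable {N : ℕ} {τ : Perm (Fin N)}

theorem val_apply_zero_le_two (hτ : τ ∈ avoidingInvolutions N) (hN : 0 < N) :
    (τ ⟨0, hN⟩ : ℕ) ≤ 2 := by
  obtain ⟨hinv, h4, h3⟩ := hτ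
  have hττ (x : Fin N) : τ (τ x) = x := DFunLike.congr_fun hinv x
  set z : Fin N := ⟨0, hN⟩
  have hz : (z : ℕ) = 0 := rfl
  by_contra! hc
  set c := τ z
  have hne (p : Fin N) (hp : 0 < (p : ℕ)) (hpc : p < c) : z < τ p ∧ τ p ≠ c := by
    refine ⟨Fin.lt_def.2 (Nat.pos_of_ne_zero fun h => ?_), fun h => ?_⟩
    · have : p = c := by rw [← hττ p, show τ p = z from Fin.ext h]
      exact hpc.ne this
    · rw [τ.injective h] at hp
      exact hp.ne' hz
  -- an entry of value above c would create 312 together with the entry 0 at position c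
  have hlt (p : Fin N) (hp : 0 < (p : ℕ)) (hpc : p < c) : τ p < c := by
    by_contra! hge
    have := h3.le_apply_of_lt hττ hpc (lt_of_le_of_ne hge (hne p hp hpc).2.symm)
    rw [hττ, Fin.le_def] at this
    omega
  let p₁ : Fin N := ⟨1, by omega⟩
  let p₂ : Fin N := ⟨2, by omega⟩
  have h₁ : p₁ < c := Fin.lt_def.2 (by simp [p₁]; omega)
  have h₂ : p₂ < c := Fin.lt_def.2 (by simp [p₂]; omega)
  rcases lt_trichotomy (τ p₁) (τ p₂) with h | h | h
  · exact h3 ⟨z, p₁, p₂, Fin.lt_def.2 (by simp [p₁, hz]), Fin.lt_def.2 (by simp [p₁, p₂]), h,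
      hlt p₂ (by simp [p₂]) h₂⟩
  · simpa [p₁, p₂] using τ.injective h
  · exact h4 ⟨z, p₁, p₂, c, Fin.lt_def.2 (by simp [p₁, hz]), Fin.lt_def.2 (by simp [p₁, p₂]), h₂,
      by rw [hττ]; exact (hne p₂ (by simp [p₂]) h₂).1, h, hlt p₁ (by simp [p₁]) h₁⟩

theorem val_apply_of_val_apply_zero (hτ : τ ∈ avoidingInvolutions N) (hN : 0 < N) {c : ℕ}
    (hc : (τ ⟨0, hN⟩ : ℕ) = c) (i : Fin N) (hi : (i : ℕ) ≤ c) : (τ i : ℕ) = c - i := by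
  have hc2 := hc ▸ val_apply_zero_le_two hτ hN
  obtain ⟨hinv, -, h3⟩ := hτ
  have hττ (x : Fin N) : τ (τ x) = x := DFunLike.congr_fun hinv x
  set z : Fin N := ⟨0, hN⟩
  have hz : (z : ℕ) = 0 := rfl
  rcases Nat.eq_zero_or_pos (i : ℕ) with hi0 | hi0
  · rw [show i = z from Fin.ext hi0]
    exact hc.trans (Nat.sub_zero c).symm
  rcases hi.eq_or_lt with hic | hic
  · rw [show i = τ z from Fin.ext (hic.trans hc.symm), hττ, hc, Nat.sub_self]
  -- Here `c = 2` and `i = 1`; a value of `τ i` above 2 would form 312 with the 0 at position 2.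
  have hτi0 : τ i ≠ z := fun h => by
    rw [← hττ i, h] at hic
    omega
  have hτiz : τ i ≠ τ z := fun h => by
    rw [τ.injective h] at hi0
    exact hi0.ne rfl
  have hτi : ¬ τ z < τ i := fun hlt => by
    have := h3.le_apply_of_lt hττ (Fin.lt_def.2 (by omega)) hlt
    rw [hττ, Fin.le_def] at this
    exact hi0.not_ge this
  simp only [Fin.lt_def] at hτi0 hτiz hτi
  omega

end FirstEntry

theorem setOf_val_apply_zero_eq_image_directSum {c m : ℕ} (hc : c ≤ 2) :
    {τ ∈ avoidingInvolutions (c + 1 + m) | (τ ⟨0, by omega⟩ : ℕ) = c} =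
      directSum Fin.revPerm '' avoidingInvolutions m := by
  rw [image_directSum_avoidingInvolutions (revPerm_mem_avoidingInvolutions (by omega))]
  refine Set.ext fun τ => and_congr_right fun hτ => ⟨fun h0 i => Fin.ext ?_, fun h => ?_⟩
  · rw [val_apply_of_val_apply_zero hτ _ h0 _ (by simp; omega)]
    simp
  · have h0 : Fin.castAdd m (0 : Fin (c + 1)) = ⟨0, by omega⟩ := Fin.ext (by simp)
    rw [← h0, h 0]
    simp

theorem ncard_setOf_val_apply_zero {N c m : ℕ} (hc : c ≤ 2) (hN : c + 1 + m = N) :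
    {τ ∈ avoidingInvolutions N | (τ ⟨0, by omega⟩ : ℕ) = c}.ncard =
      (avoidingInvolutions m).ncard := by
  subst hN
  rw [setOf_val_apply_zero_eq_image_directSum hc,
    ncard_image_of_injective _ (directSum_right_injective _)]

theorem ncard_avoidingInvolutions_add_three (n : ℕ) :
    (avoidingInvolutions (n + 3)).ncard = (avoidingInvolutions (n + 2)).ncard +
      (avoidingInvolutions (n + 1)).ncard + (avoidingInvolutions n).ncard := by
  let S (c : ℕ) := {τ ∈ avoidingInvolutions (n + 3) | (τ ⟨0, by omega⟩ : ℕ) = c}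
  have hsplit : avoidingInvolutions (n + 3) = S 0 ∪ S 1 ∪ S 2 := by
    ext τ
    constructor
    · intro hτ
      have := val_apply_zero_le_two hτ (by omega)
      simp only [S, mem_union, mem_sep_iff, hτ, true_and]
      omega
    · rintro ((h | h) | h) <;> exact h.1
  have hdisj {c d : ℕ} (hcd : c ≠ d) : Disjoint (S c) (S d) :=
    Set.disjoint_left.2 fun τ hc hd => hcd (hc.2.symm.trans hd.2)
  rw [hsplit, ncard_union_eq (Set.disjoint_union_left.2 ⟨hdisj (by decide), hdisj (by decide)⟩),
    ncard_union_eq (hdisj (by decide)),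
    ncard_setOf_val_apply_zero (c := 0) (m := n + 2) (by decide) (by omega),
    ncard_setOf_val_apply_zero (c := 1) (m := n + 1) (by decide) (by omega),
    ncard_setOf_val_apply_zero (c := 2) (m := n) (by decide) (by omega)]

theorem avoidingInvolutions_eq_univ {n : ℕ} (hn : n ≤ 2) : avoidingInvolutions n = univ := by
  refine eq_univ_of_forall fun τ => ⟨?_, ?_, ?_⟩
  · interval_cases n <;> revert τ <;> decide
  · rintro ⟨i, j, k, l, hij, hjk, hkl, -⟩
    simp only [Fin.lt_def] at hij hjk hkl
    omega
  · rintro ⟨i, j, k, hij, hjk, -⟩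
    simp only [Fin.lt_def] at hij hjk
    omega

theorem ncard_avoidingInvolutions : ∀ n, (avoidingInvolutions n).ncard = trib (n + 2)
  | 0 | 1 | 2 => by
    rw [avoidingInvolutions_eq_univ (by decide), ncard_univ, Nat.card_perm, Nat.card_fin]
    rfl
  | n + 3 => by
    rw [ncard_avoidingInvolutions_add_three, ncard_avoidingInvolutions n,
      ncard_avoidingInvolutions (n + 1), ncard_avoidingInvolutions (n + 2)]
    rfl

theorem involutions_avoiding_4321_312 (n : ℕ) :
    (∀ τ : Equiv.Perm (Fin n), τ * τ = 1 →
      ((Av4321 τ ∧ Av312 τ) ↔ (Av4321 τ ∧ Av231 τ))) ∧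
    Nat.card {τ : Equiv.Perm (Fin n) // τ * τ = 1 ∧ Av4321 τ ∧ Av312 τ} = trib (n + 2) := by
  refine ⟨fun τ hτ => ?_, ncard_avoidingInvolutions n⟩
  rw [av231_iff_av312_inv, inv_eq_of_mul_eq_one_right hτ]
end

section
/- Every involution of {1,...,n} that avoids 312 also avoids 3412 and 231; consequently the sets of involutions avoiding {3412,312}, avoiding {3412,231}, and avoiding 312 all coincide, and their common cardinality is 2^{n−1} for n ≥ 1. -/
/-!
Let `τ` be an involution of `{0, …, n}` avoiding 312 and `m = τ n`. A point `i ≥ m` with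
`τ i < m` would give the 312 `(m, i, n)`, and an ascent `τ i < τ j` with `m ≤ i < j < n` the
231 `(i, j, n)`, which is the inverse of a 312. Hence `τ` reverses the block `[m, n]` and
restricts to a 312-avoiding involution of `{0, …, m - 1}`; conversely every such involution
extended by the reversal avoids 312. So `a (n + 1) = ∑_{m ≤ n} a m` with `a 0 = 1`, and
`a (n + 1) = 2 ^ n`. The set equalities hold because 3412 contains 312 and involutions avoid
231 exactly when they avoid 312.
-/

open Equiv Finset Fin

lemma Equiv.Perm.apply_apply_of_mul_self_eq_one {α : Type*} {τ : Perm α} (hτ : τ * τ = 1)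
    (x : α) : τ (τ x) = x := by
  rw [← Perm.mul_apply, hτ, Perm.one_apply]

section Patterns

variable {m n : ℕ}

lemma Av312.av3412 {τ : Perm (Fin n)} (h : Av312 τ) : Av3412 τ := by
  rintro ⟨i, j, k, l, hij, hjk, hkl, h1, h2, -⟩
  exact h ⟨i, k, l, hij.trans hjk, hkl, h1, h2⟩

lemma av231_inv_iff {τ : Perm (Fin n)} : Av231 τ⁻¹ ↔ Av312 τ := by
  refine not_congr ⟨fun ⟨i, j, k, hij, hjk, h1, h2⟩ => ?_, fun ⟨i, j, k, hij, hjk, h1, h2⟩ => ?_⟩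
  · exact ⟨τ⁻¹ k, τ⁻¹ i, τ⁻¹ j, h1, h2, by simpa using hij, by simpa using hjk⟩
  · exact ⟨τ j, τ k, τ i, h1, h2, by simpa using hij, by simpa using hjk⟩

lemma av312_iff_av231_of_mul_self_eq_one {τ : Perm (Fin n)} (hτ : τ * τ = 1) :
    Av312 τ ↔ Av231 τ := by
  rw [← av231_inv_iff, mul_eq_one_iff_inv_eq.1 hτ]

lemma Av312.of_orderEmbedding {τ : Perm (Fin n)} {σ : Perm (Fin m)} (e : Fin m ↪o Fin n)
    (he : ∀ i, τ (e i) = e (σ i)) (h : Av312 τ) : Av312 σ := by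
  rintro ⟨i, j, k, hij, hjk, h1, h2⟩
  exact h ⟨e i, e j, e k, e.strictMono hij, e.strictMono hjk, by simpa [he] using h1,
    by simpa [he] using h2⟩

end Patterns

namespace Equiv.Perm

variable {m n : ℕ}

-- The direct sum `σ ⊕ δ` of `σ` with the decreasing permutation `δ` of the last `n + 1 - m` points.
def sumRevFun (σ : Perm (Fin m)) (hm : m ≤ n) (i : Fin (n + 1)) : Fin (n + 1) :=
  if h : (i : ℕ) < m then (σ ⟨i, h⟩).castLE (by omega) else ⟨m + n - i, by omega⟩

lemma sumRevFun_inv_apply (σ : Perm (Fin m)) (hm : m ≤ n) (i : Fin (n + 1)) :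
    sumRevFun σ⁻¹ hm (sumRevFun σ hm i) = i := by
  unfold sumRevFun
  split_ifs with h h' h'
  · ext; simp only [val_castLE, Fin.eta, coe_inv, symm_apply_apply]
  · simp only [val_castLE, is_lt, not_true_eq_false] at h'
  · dsimp only at h'; omega
  · ext; dsimp only; omega

def sumRev (σ : Perm (Fin m)) (hm : m ≤ n) : Perm (Fin (n + 1)) where
  toFun := sumRevFun σ hm
  invFun := sumRevFun σ⁻¹ hm
  left_inv := sumRevFun_inv_apply σ hm
  right_inv := sumRevFun_inv_apply σ⁻¹ hm

lemma sumRev_apply_of_lt (σ : Perm (Fin m)) (hm : m ≤ n) {i : Fin (n + 1)} (h : (i : ℕ) < m) :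
    sumRev σ hm i = (σ ⟨i, h⟩).castLE (by omega) :=
  dif_pos h

lemma val_sumRev_apply_of_le (σ : Perm (Fin m)) (hm : m ≤ n) {i : Fin (n + 1)}
    (h : m ≤ (i : ℕ)) : (sumRev σ hm i : ℕ) = m + n - i := by
  change (sumRevFun σ hm i : ℕ) = _
  rw [sumRevFun, dif_neg h.not_gt]

lemma sumRev_mul_self (σ : Perm (Fin m)) (hm : m ≤ n) (hσ : σ * σ = 1) :
    sumRev σ hm * sumRev σ hm = 1 := by
  rw [mul_eq_one_iff_inv_eq] at hσ ⊢
  conv_rhs => rw [← hσ]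
  rfl

lemma av312_sumRev {σ : Perm (Fin m)} (hm : m ≤ n) (h : Av312 σ) : Av312 (sumRev σ hm) := by
  rintro ⟨i, j, k, hij, hjk, h1, h2⟩
  rw [Fin.lt_def] at hij hjk h1 h2
  by_cases hk : (k : ℕ) < m
  · have hj : (j : ℕ) < m := hjk.trans hk
    have hi : (i : ℕ) < m := hij.trans hj
    simp only [sumRev_apply_of_lt σ hm hi, sumRev_apply_of_lt σ hm hj,
      sumRev_apply_of_lt σ hm hk, val_castLE] at h1 h2
    exact h ⟨⟨i, by omega⟩, ⟨j, by omega⟩, ⟨k, hk⟩, hij, hjk, h1, h2⟩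
  · rw [val_sumRev_apply_of_le σ hm (not_lt.1 hk)] at h1 h2
    by_cases hi : (i : ℕ) < m
    · rw [sumRev_apply_of_lt σ hm hi] at h2
      simp only [val_castLE] at h2
      omega
    · rw [val_sumRev_apply_of_le σ hm (by omega)] at h1
      omega

def restrictLT (τ : Perm (Fin n)) (hm : m ≤ n) (h : ∀ i : Fin n, (τ i : ℕ) < m ↔ (i : ℕ) < m) :
    Perm (Fin m) :=
  (Fin.castLEOrderIso hm).symm.toEquiv.permCongr (τ.subtypePerm h)

lemma castLE_restrictLT_apply (τ : Perm (Fin n)) (hm : m ≤ n) (h) (i : Fin m) :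
    (restrictLT τ hm h i).castLE hm = τ (i.castLE hm) :=
  Fin.ext rfl

lemma restrictLT_mul_self {τ : Perm (Fin n)} (hτ : τ * τ = 1) (hm : m ≤ n) (h) :
    restrictLT τ hm h * restrictLT τ hm h = 1 :=
  Equiv.ext fun i => Fin.castLE_injective hm <| by
    rw [mul_apply, castLE_restrictLT_apply, castLE_restrictLT_apply,
      apply_apply_of_mul_self_eq_one hτ, one_apply]

lemma av312_restrictLT {τ : Perm (Fin n)} (hm : m ≤ n) (h) (h312 : Av312 τ) :
    Av312 (restrictLT τ hm h) :=
  h312.of_orderEmbedding (Fin.castLEOrderEmb hm) fun i => (castLE_restrictLT_apply τ hm h i).symm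

section LastValue

variable {τ : Perm (Fin (n + 1))}

lemma le_apply_of_le_of_av312 (hτ : τ * τ = 1) (h312 : Av312 τ) {i : Fin (n + 1)}
    (hi : τ (last n) ≤ i) : τ (last n) ≤ τ i := by
  set m := τ (last n)
  have hm : τ m = last n := apply_apply_of_mul_self_eq_one hτ _
  by_contra! hlt
  have hiL : i < last n := (le_last i).lt_of_ne (by rintro rfl; exact lt_irrefl _ hlt)
  have hmi : m < i := hi.lt_of_ne (by rintro rfl; exact (le_last m).not_gt (hm ▸ hlt))
  exact h312 ⟨m, i, last n, hmi, hiL, hlt, by rw [hm]; exact hmi.trans hiL⟩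

lemma apply_lt_of_lt_of_av312 (hτ : τ * τ = 1) (h312 : Av312 τ) {i : Fin (n + 1)}
    (hi : i < τ (last n)) : τ i < τ (last n) := by
  by_contra! h
  have := le_apply_of_le_of_av312 hτ h312 h
  rw [apply_apply_of_mul_self_eq_one hτ] at this
  exact this.not_gt hi

lemma val_apply_lt_iff_of_av312 (hτ : τ * τ = 1) (h312 : Av312 τ) (i : Fin (n + 1)) :
    (τ i : ℕ) < τ (last n) ↔ (i : ℕ) < τ (last n) :=
  ⟨fun h => not_le.1 fun hi => (le_apply_of_le_of_av312 hτ h312 hi).not_gt h,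
    apply_lt_of_lt_of_av312 hτ h312⟩

lemma apply_lt_apply_of_le_of_av312 (hτ : τ * τ = 1) (h312 : Av312 τ) {i j : Fin (n + 1)}
    (hi : τ (last n) ≤ i) (hij : i < j) : τ j < τ i := by
  have hmi : τ (last n) < τ i :=
    (le_apply_of_le_of_av312 hτ h312 hi).lt_of_ne (τ.injective.ne (hij.trans_le (le_last j)).ne')
  rcases (le_last j).lt_or_eq with hjL | rfl
  · by_contra! hji
    exact (av312_iff_av231_of_mul_self_eq_one hτ).1 h312
      ⟨i, j, last n, hij, hjL, hmi, hji.lt_of_ne (τ.injective.ne hij.ne)⟩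
  · exact hmi

lemma val_apply_add_of_le_of_av312 (hτ : τ * τ = 1) (h312 : Av312 τ) {i : Fin (n + 1)}
    (hi : τ (last n) ≤ i) : (τ i : ℕ) + i = τ (last n) + n := by
  have h1 : #(Ioi i) ≤ #(Ico (τ (last n)) (τ i)) :=
    card_le_card_of_injOn τ (fun j hj => by
      have hij := mem_Ioi.1 hj
      exact mem_Ico.2 ⟨le_apply_of_le_of_av312 hτ h312 (hi.trans hij.le),
        apply_lt_apply_of_le_of_av312 hτ h312 hi hij⟩) τ.injective.injOn
  have h2 : #(Ico (τ (last n)) i) ≤ #(Ioi (τ i)) :=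
    card_le_card_of_injOn τ (fun j hj => by
      have hj := mem_Ico.1 hj
      exact mem_Ioi.2 (apply_lt_apply_of_le_of_av312 hτ h312 hj.1 hj.2)) τ.injective.injOn
  simp only [Fin.card_Ioi, Fin.card_Ico, add_tsub_cancel_right] at h1 h2
  have := Fin.le_def.1 (le_apply_of_le_of_av312 hτ h312 hi)
  have := (τ i).is_le
  rw [Fin.le_def] at hi
  omega

end LastValue

end Equiv.Perm

open Perm

def involutions312 (n : ℕ) : Set (Perm (Fin n)) := {τ | τ * τ = 1 ∧ Av312 τ}

variable {n : ℕ}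

def involutions312FiberLastEquiv (m : Fin (n + 1)) :
    {τ : involutions312 (n + 1) // τ.1 (last n) = m} ≃ involutions312 m where
  toFun τ := ⟨restrictLT τ.1.1 m.is_le' fun i => by
      obtain ⟨⟨τ, hτ, h312⟩, rfl⟩ := τ; exact val_apply_lt_iff_of_av312 hτ h312 i,
    restrictLT_mul_self τ.1.2.1 _ _, av312_restrictLT _ _ τ.1.2.2⟩
  invFun σ := ⟨⟨sumRev σ.1 m.is_le, sumRev_mul_self _ _ σ.2.1, av312_sumRev _ σ.2.2⟩,
    Fin.ext <| by rw [val_sumRev_apply_of_le _ _ m.is_le]; simp⟩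
  left_inv := by
    rintro ⟨⟨τ, hτ, h312⟩, rfl⟩
    refine Subtype.ext <| Subtype.ext <| Equiv.ext fun i => ?_
    by_cases hi : (i : ℕ) < τ (last n)
    · exact (sumRev_apply_of_lt _ _ hi).trans (castLE_restrictLT_apply _ _ _ _)
    · have := val_apply_add_of_le_of_av312 hτ h312 (not_lt.1 hi)
      ext
      change _ = (τ i : ℕ)
      rw [val_sumRev_apply_of_le _ _ (not_lt.1 hi)]
      omega
  right_inv σ := Subtype.ext <| Equiv.ext fun i => Fin.castLE_injective m.is_le' <| by
    rw [castLE_restrictLT_apply, sumRev_apply_of_lt _ _ i.2]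
    rfl

lemma card_involutions312_succ (n : ℕ) :
    Nat.card (involutions312 (n + 1)) = ∑ m ∈ range (n + 1), Nat.card (involutions312 m) := by
  rw [← Nat.card_congr (Equiv.sigmaFiberEquiv fun τ : involutions312 (n + 1) => τ.1 (last n)),
    Nat.card_sigma, ← Fin.sum_univ_eq_sum_range]
  exact Finset.sum_congr rfl fun m _ => Nat.card_congr (involutions312FiberLastEquiv m)

lemma card_involutions312_zero : Nat.card (involutions312 0) = 1 :=
  Nat.card_eq_one_iff_unique.2 ⟨inferInstance, ⟨⟨1, mul_one 1, fun ⟨i, _⟩ => i.elim0⟩⟩⟩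

lemma card_involutions312_succ_eq_pow (n : ℕ) : Nat.card (involutions312 (n + 1)) = 2 ^ n := by
  induction n with
  | zero => rw [card_involutions312_succ, sum_range_one, card_involutions312_zero, pow_zero]
  | succ n ih =>
    rw [card_involutions312_succ, sum_range_succ, ← card_involutions312_succ, ih, pow_succ,
      mul_two]

theorem involutions_avoiding_312 (n : ℕ) :
    (∀ τ : Equiv.Perm (Fin n), τ * τ = 1 → Av312 τ → Av3412 τ ∧ Av231 τ) ∧
    {τ : Equiv.Perm (Fin n) | τ * τ = 1 ∧ Av3412 τ ∧ Av312 τ} =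
      {τ : Equiv.Perm (Fin n) | τ * τ = 1 ∧ Av3412 τ ∧ Av231 τ} ∧
    {τ : Equiv.Perm (Fin n) | τ * τ = 1 ∧ Av3412 τ ∧ Av312 τ} =
      {τ : Equiv.Perm (Fin n) | τ * τ = 1 ∧ Av312 τ} ∧
    (1 ≤ n →
      Nat.card {τ : Equiv.Perm (Fin n) // τ * τ = 1 ∧ Av312 τ} = 2 ^ (n - 1)) := by
  refine ⟨fun τ hτ h => ⟨h.av3412, (av312_iff_av231_of_mul_self_eq_one hτ).1 h⟩, ?_, ?_, ?_⟩
  · ext τ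
    exact and_congr_right fun hτ => and_congr_right' (av312_iff_av231_of_mul_self_eq_one hτ)
  · ext τ
    exact and_congr_right fun _ => ⟨And.right, fun h => ⟨h.av3412, h⟩⟩
  · intro hn
    obtain ⟨k, rfl⟩ := Nat.exists_eq_add_of_le' hn
    exact card_involutions312_succ_eq_pow k
end

section
/- The number of involutions of {1,...,n} avoiding both 3412 and 123 equals 1 + ⌊n/2⌋·⌈n/2⌉. -/
def Av123 {n : ℕ} (σ : Equiv.Perm (Fin n)) : Prop :=
  ¬ ∃ i j k : Fin n, i < j ∧ j < k ∧ σ i < σ j ∧ σ j < σ k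

/-! Let `τ` be an involution of `Fin (n + 2)` avoiding 3412 and 123, and `c = τ 0`. If `c` is the
last point, `τ` swaps the two ends and is the frame of an involution of the `n` inner points that
again avoids both patterns; conversely every such frame does. Otherwise 3412-avoidance forces
`τ (last) > c`, and then 123-avoidance makes `τ` map `[0, c]` to itself and decrease on `[0, c]` and
on `(c, n + 1]`, so `τ` reverses these two blocks. Hence the counts satisfy
`a (n + 2) = a n + (n + 1)` with `a 0 = a 1 = 1`. -/

open Equiv Finset

theorem Equiv.Perm.mul_self_eq_one_iff {α : Type*} {σ : Perm α} :
    σ * σ = 1 ↔ Function.Involutive σ := by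
  simp [Perm.ext_iff, Function.Involutive]

section BlockRev

variable {n : ℕ}

def blockRevFun (c i : Fin n) : Fin n :=
  if h : (i : ℕ) ≤ c then ⟨(c : ℕ) - i, by omega⟩ else ⟨n + (c : ℕ) - i, by omega⟩

theorem val_blockRevFun (c i : Fin n) :
    (blockRevFun c i : ℕ) = if (i : ℕ) ≤ c then (c : ℕ) - i else n + (c : ℕ) - i := by
  unfold blockRevFun; split_ifs <;> rfl

theorem blockRevFun_involutive (c : Fin n) : Function.Involutive (blockRevFun c) := by
  intro i
  ext
  simp only [val_blockRevFun]
  split_ifs <;> omega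

def blockRev (c : Fin n) : Perm (Fin n) :=
  (blockRevFun_involutive c).toPerm

theorem val_blockRev (c i : Fin n) :
    (blockRev c i : ℕ) = if (i : ℕ) ≤ c then (c : ℕ) - i else n + (c : ℕ) - i :=
  val_blockRevFun c i

@[simp] theorem blockRev_apply_zero (c : Fin (n + 1)) : blockRev c 0 = c :=
  Fin.ext (by simp [val_blockRev])

theorem blockRev_mul_self (c : Fin n) : blockRev c * blockRev c = 1 :=
  Perm.mul_self_eq_one_iff.2 (blockRevFun_involutive c)

theorem av123_blockRev (c : Fin n) : Av123 (blockRev c) := by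
  rintro ⟨i, j, k, hij, hjk, h₁, h₂⟩
  simp only [Fin.lt_def, val_blockRev] at *
  split_ifs at h₁ h₂ <;> omega

theorem av3412_blockRev (c : Fin n) : Av3412 (blockRev c) := by
  rintro ⟨i, j, k, l, hij, hjk, hkl, h₁, h₂, h₃⟩
  simp only [Fin.lt_def, val_blockRev] at *
  split_ifs at h₁ h₂ h₃ <;> omega

end BlockRev

section Frame

variable {n : ℕ}

def frameFun (f : Fin n → Fin n) : Fin (n + 2) → Fin (n + 2) :=
  Fin.cases (Fin.last _) (Fin.lastCases 0 fun i => (f i).castSucc.succ)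

@[simp] theorem frameFun_zero (f : Fin n → Fin n) : frameFun f 0 = Fin.last _ := rfl

@[simp] theorem frameFun_last (f : Fin n → Fin n) : frameFun f (Fin.last _) = 0 := by
  simp [frameFun, ← Fin.succ_last]

@[simp] theorem frameFun_succ_castSucc (f : Fin n → Fin n) (i : Fin n) :
    frameFun f i.castSucc.succ = (f i).castSucc.succ := by
  simp [frameFun]

theorem Fin.eq_zero_or_eq_last_or_eq_succ_castSucc (x : Fin (n + 2)) :
    x = 0 ∨ x = Fin.last _ ∨ ∃ i : Fin n, x = i.castSucc.succ := by
  rcases Fin.eq_zero_or_eq_succ x with rfl | ⟨y, rfl⟩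
  · exact .inl rfl
  rcases Fin.eq_castSucc_or_eq_last y with ⟨i, rfl⟩ | rfl
  · exact .inr (.inr ⟨i, rfl⟩)
  · exact .inr (.inl (Fin.succ_last _))

theorem frameFun_leftInverse_iff {f g : Fin n → Fin n} :
    Function.LeftInverse (frameFun f) (frameFun g) ↔ Function.LeftInverse f g := by
  refine ⟨fun h i => ?_, fun h x => ?_⟩
  · simpa using h i.castSucc.succ
  · rcases Fin.eq_zero_or_eq_last_or_eq_succ_castSucc x with rfl | rfl | ⟨i, rfl⟩ <;> simp [h.eq]

def frame (σ : Perm (Fin n)) : Perm (Fin (n + 2)) where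
  toFun := frameFun σ
  invFun := frameFun σ.symm
  left_inv := frameFun_leftInverse_iff.2 σ.left_inv
  right_inv := frameFun_leftInverse_iff.2 σ.right_inv

theorem frame_mul_self_eq_one_iff {σ : Perm (Fin n)} : frame σ * frame σ = 1 ↔ σ * σ = 1 := by
  simp only [Perm.mul_self_eq_one_iff]
  exact frameFun_leftInverse_iff

@[simp] theorem frame_apply_zero (σ : Perm (Fin n)) : frame σ 0 = Fin.last _ := rfl

@[simp] theorem frame_apply_last (σ : Perm (Fin n)) : frame σ (Fin.last _) = 0 :=
  frameFun_last σ

@[simp] theorem frame_apply_succ_castSucc (σ : Perm (Fin n)) (i : Fin n) :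
    frame σ i.castSucc.succ = (σ i).castSucc.succ :=
  frameFun_succ_castSucc σ i

theorem ne_zero_of_frame_lt {σ : Perm (Fin n)} {x y : Fin (n + 2)} (h : frame σ x < frame σ y) :
    x ≠ 0 := by
  rintro rfl
  rw [frame_apply_zero] at h
  exact (Fin.le_last _).not_gt h

theorem ne_last_of_lt_frame {σ : Perm (Fin n)} {x y : Fin (n + 2)} (h : frame σ y < frame σ x) :
    x ≠ Fin.last _ := by
  rintro rfl
  rw [frame_apply_last] at h
  exact Fin.not_lt_zero _ h

theorem Fin.exists_succ_castSucc_eq {x : Fin (n + 2)} (h₀ : x ≠ 0) (hlast : x ≠ Fin.last _) :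
    ∃ i : Fin n, i.castSucc.succ = x := by
  rcases Fin.eq_zero_or_eq_last_or_eq_succ_castSucc x with rfl | rfl | ⟨i, rfl⟩
  exacts [absurd rfl h₀, absurd rfl hlast, ⟨i, rfl⟩]

theorem av123_frame_iff {σ : Perm (Fin n)} : Av123 (frame σ) ↔ Av123 σ := by
  refine not_congr ⟨fun ⟨i, j, k, hij, hjk, h₁, h₂⟩ => ?_, fun ⟨i, j, k, hij, hjk, h₁, h₂⟩ => ?_⟩
  · obtain ⟨i, rfl⟩ := Fin.exists_succ_castSucc_eq (ne_zero_of_frame_lt h₁) (Fin.ne_last_of_lt hij)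
    obtain ⟨j, rfl⟩ := Fin.exists_succ_castSucc_eq (Fin.ne_zero_of_lt hij) (Fin.ne_last_of_lt hjk)
    obtain ⟨k, rfl⟩ := Fin.exists_succ_castSucc_eq (Fin.ne_zero_of_lt hjk) (ne_last_of_lt_frame h₂)
    simp only [frame_apply_succ_castSucc, Fin.succ_lt_succ_iff, Fin.castSucc_lt_castSucc_iff]
      at hij hjk h₁ h₂
    exact ⟨i, j, k, hij, hjk, h₁, h₂⟩
  · exact ⟨i.castSucc.succ, j.castSucc.succ, k.castSucc.succ, by simpa using ⟨hij, hjk, h₁, h₂⟩⟩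

theorem av3412_frame_iff {σ : Perm (Fin n)} : Av3412 (frame σ) ↔ Av3412 σ := by
  refine not_congr ⟨fun ⟨i, j, k, l, hij, hjk, hkl, h₁, h₂, h₃⟩ => ?_,
    fun ⟨i, j, k, l, hij, hjk, hkl, h₁, h₂, h₃⟩ => ?_⟩
  · obtain ⟨i, rfl⟩ := Fin.exists_succ_castSucc_eq (ne_zero_of_frame_lt h₃) (Fin.ne_last_of_lt hij)
    obtain ⟨j, rfl⟩ := Fin.exists_succ_castSucc_eq (Fin.ne_zero_of_lt hij) (Fin.ne_last_of_lt hjk)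
    obtain ⟨k, rfl⟩ := Fin.exists_succ_castSucc_eq (Fin.ne_zero_of_lt hjk) (Fin.ne_last_of_lt hkl)
    obtain ⟨l, rfl⟩ := Fin.exists_succ_castSucc_eq (Fin.ne_zero_of_lt hkl) (ne_last_of_lt_frame h₁)
    simp only [frame_apply_succ_castSucc, Fin.succ_lt_succ_iff, Fin.castSucc_lt_castSucc_iff]
      at hij hjk hkl h₁ h₂ h₃
    exact ⟨i, j, k, l, hij, hjk, hkl, h₁, h₂, h₃⟩
  · exact ⟨i.castSucc.succ, j.castSucc.succ, k.castSucc.succ, l.castSucc.succ,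
      by simpa using ⟨hij, hjk, hkl, h₁, h₂, h₃⟩⟩

theorem exists_frame_eq {τ : Perm (Fin (n + 2))} (h₀ : τ 0 = Fin.last _)
    (hlast : τ (Fin.last _) = 0) :
    ∃ σ : Perm (Fin n), frame σ = τ := by
  have hinner (i : Fin n) : ∃ j : Fin n, j.castSucc.succ = τ i.castSucc.succ := by
    refine Fin.exists_succ_castSucc_eq ?_ ?_
    · rw [← hlast, τ.injective.ne_iff, Ne, Fin.ext_iff]
      simp [i.isLt.ne]
    · rw [← h₀, τ.injective.ne_iff, Ne, Fin.ext_iff]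
      simp
  choose f hf using hinner
  have hf_inj : Function.Injective f := fun i j h =>
    Fin.castSucc_injective _ <| Fin.succ_injective _ <|
      τ.injective ((hf i).symm.trans (by rw [h, hf j]))
  refine ⟨Equiv.ofBijective f (Finite.injective_iff_bijective.1 hf_inj), Equiv.ext fun x => ?_⟩
  rcases Fin.eq_zero_or_eq_last_or_eq_succ_castSucc x with rfl | rfl | ⟨i, rfl⟩
  · simp [h₀]
  · simp [hlast]
  · simp [hf]

theorem frame_injective : Function.Injective (frame (n := n)) := fun σ τ h =>
  Equiv.ext fun i => Fin.castSucc_injective _ <| Fin.succ_injective _ <| by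
    simpa using congrFun (congrArg DFunLike.coe h) i.castSucc.succ

end Frame

theorem Fin.val_add_sub_le_of_strictAntiOn {m n : ℕ} {f : Fin n → Fin m} {i j : Fin n}
    (hf : StrictAntiOn f (Set.Icc i j)) (hij : i ≤ j) : (f j : ℕ) + (j - i) ≤ f i := by
  obtain ⟨k, hk⟩ : ∃ k, (j : ℕ) = i + k := ⟨j - i, by omega⟩
  induction k generalizing j with
  | zero => simp [Fin.ext (hk.trans (add_zero _))]
  | succ k ih =>
    let j' : Fin n := ⟨i + k, by omega⟩
    have hj'_val : (j' : ℕ) = i + k := rfl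
    have hij' : i ≤ j' := Fin.le_def.2 (by omega)
    have hj' : j' < j := Fin.lt_def.2 (by omega)
    have hstep := hf ⟨hij', hj'.le⟩ ⟨hij, le_rfl⟩ hj'
    have := ih (hf.mono (Set.Icc_subset_Icc_right hj'.le)) hij' rfl
    rw [Fin.lt_def] at hstep
    omega

section Classification

variable {n : ℕ} {τ : Perm (Fin (n + 1))}

theorem apply_zero_lt_apply_last (hτ : Function.Involutive τ) (h3412 : Av3412 τ)
    (hc : τ 0 ≠ Fin.last n) : τ 0 < τ (Fin.last n) := by
  by_contra! hdc
  have hd₀ : τ (Fin.last n) ≠ 0 := fun h => hc (by rw [← h, hτ])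
  have hdc' : τ (Fin.last n) ≠ τ 0 := fun h => hc <| by
    obtain rfl : n = 0 := by simpa using τ.injective h
    exact Subsingleton.elim (α := Fin 1) _ _
  have hd_pos : 0 < τ (Fin.last n) := Fin.pos_iff_ne_zero.2 hd₀
  have hdc_lt : τ (Fin.last n) < τ 0 := lt_of_le_of_ne hdc hdc'
  have hc_lt : τ 0 < Fin.last n := Fin.lt_last_iff_ne_last.2 hc
  exact h3412 ⟨0, τ (Fin.last n), τ 0, Fin.last n, hd_pos, hdc_lt, hc_lt,
    by rwa [hτ], hdc_lt, by rwa [hτ]⟩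

theorem apply_le_apply_zero_of_le (hτ : Function.Involutive τ) (h3412 : Av3412 τ)
    (h123 : Av123 τ) (hc : τ 0 ≠ Fin.last n) {i : Fin (n + 1)} (hi : i ≤ τ 0) :
    τ i ≤ τ 0 := by
  by_contra! h
  have hd := apply_zero_lt_apply_last hτ h3412 hc
  have hi_pos : 0 < i := Fin.pos_iff_ne_zero.2 <| by rintro rfl; exact h.false
  have hid : i < τ (Fin.last n) := hi.trans_lt hd
  have hi_last : τ i < Fin.last n := by
    refine Fin.lt_last_iff_ne_last.2 fun h' => hid.ne (τ.injective ?_)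
    rw [h', hτ]
  exact h123 ⟨0, i, τ (Fin.last n), hi_pos, hid, h, by rwa [hτ]⟩

theorem apply_zero_lt_apply_of_lt (hτ : Function.Involutive τ) (h3412 : Av3412 τ)
    (h123 : Av123 τ) (hc : τ 0 ≠ Fin.last n) {i : Fin (n + 1)} (hi : τ 0 < i) :
    τ 0 < τ i := by
  by_contra! h
  have := apply_le_apply_zero_of_le hτ h3412 h123 hc h
  rw [hτ] at this
  exact this.not_gt hi

theorem strictAntiOn_Iic_apply_zero (hτ : Function.Involutive τ) (h3412 : Av3412 τ)
    (h123 : Av123 τ) (hc : τ 0 ≠ Fin.last n) : StrictAntiOn τ (Set.Iic (τ 0)) := by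
  intro p _ q hq hpq
  by_contra! h
  have hd := apply_zero_lt_apply_last hτ h3412 hc
  have hq_last : τ q < τ (τ (Fin.last n)) := by
    rw [hτ]
    exact (apply_le_apply_zero_of_le hτ h3412 h123 hc hq).trans_lt (Fin.lt_last_iff_ne_last.2 hc)
  exact h123 ⟨p, q, τ (Fin.last n), hpq, (Set.mem_Iic.1 hq).trans_lt hd,
    h.lt_of_ne (τ.injective.ne hpq.ne), hq_last⟩

theorem strictAntiOn_Ioi_apply_zero (hτ : Function.Involutive τ) (h3412 : Av3412 τ)
    (h123 : Av123 τ) (hc : τ 0 ≠ Fin.last n) : StrictAntiOn τ (Set.Ioi (τ 0)) := by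
  intro p hp q _ hpq
  by_contra! h
  exact h123 ⟨0, p, q, (Fin.zero_le _).trans_lt hp, hpq,
    apply_zero_lt_apply_of_lt hτ h3412 h123 hc hp, h.lt_of_ne (τ.injective.ne hpq.ne)⟩

theorem eq_blockRev_apply_zero (hτ : Function.Involutive τ) (h3412 : Av3412 τ)
    (h123 : Av123 τ) (hc : τ 0 ≠ Fin.last n) : τ = blockRev (τ 0) := by
  ext i
  rw [val_blockRev]
  split_ifs with hi
  · have hi : i ≤ τ 0 := Fin.le_def.2 hi
    have hanti := strictAntiOn_Iic_apply_zero hτ h3412 h123 hc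
    have h₁ := Fin.val_add_sub_le_of_strictAntiOn
      (hanti.mono (Set.Icc_subset_Iic_self.trans (Set.Iic_subset_Iic.2 hi))) (Fin.zero_le i)
    have h₂ := Fin.val_add_sub_le_of_strictAntiOn (hanti.mono Set.Icc_subset_Iic_self) hi
    rw [hτ 0] at h₂
    simp only [Fin.val_zero] at h₁ h₂
    omega
  · have hi : τ 0 < i := Fin.lt_def.2 (by omega)
    have hd : (τ 0 : ℕ) < τ (Fin.last n) := apply_zero_lt_apply_last hτ h3412 hc
    have hc_lt : (τ 0 : ℕ) < n := Fin.lt_last_iff_ne_last.2 hc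
    let c' : Fin (n + 1) := ⟨τ 0 + 1, by omega⟩
    have hc' : τ 0 < c' := Fin.lt_def.2 (Nat.lt_succ_self _)
    have hci : c' ≤ i := Fin.le_def.2 (show (τ 0 : ℕ) + 1 ≤ i by omega)
    have hanti := strictAntiOn_Ioi_apply_zero hτ h3412 h123 hc
    have h₁ := Fin.val_add_sub_le_of_strictAntiOn
      (hanti.mono fun x hx => hc'.trans_le hx.1) hci
    have h₂ := Fin.val_add_sub_le_of_strictAntiOn
      (hanti.mono fun x hx => hi.trans_le hx.1) (Fin.le_last i)
    have := (τ c').isLt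
    simp only [Fin.val_last, c'] at h₁ h₂
    omega

end Classification

instance {n : ℕ} (σ : Perm (Fin n)) : Decidable (Av3412 σ) := by unfold Av3412; infer_instance

instance {n : ℕ} (σ : Perm (Fin n)) : Decidable (Av123 σ) := by unfold Av123; infer_instance

def avInvolutions (n : ℕ) : Finset (Perm (Fin n)) :=
  {τ | τ * τ = 1 ∧ Av3412 τ ∧ Av123 τ}

theorem mem_avInvolutions {n : ℕ} {τ : Perm (Fin n)} :
    τ ∈ avInvolutions n ↔ τ * τ = 1 ∧ Av3412 τ ∧ Av123 τ := by
  simp [avInvolutions]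

theorem mem_avInvolutions_add_two {n : ℕ} {τ : Perm (Fin (n + 2))} :
    τ ∈ avInvolutions (n + 2) ↔
      (∃ σ ∈ avInvolutions n, frame σ = τ) ∨ ∃ c : Fin (n + 1), blockRev c.castSucc = τ := by
  simp only [mem_avInvolutions]
  constructor
  · rintro ⟨hτ, h3412, h123⟩
    by_cases h₀ : τ 0 = Fin.last _
    · have hlast : τ (Fin.last _) = 0 := by rw [← h₀, Perm.mul_self_eq_one_iff.1 hτ]
      obtain ⟨σ, rfl⟩ := exists_frame_eq h₀ hlast
      exact .inl ⟨σ, ⟨frame_mul_self_eq_one_iff.1 hτ, av3412_frame_iff.1 h3412,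
        av123_frame_iff.1 h123⟩, rfl⟩
    · obtain ⟨c, hc⟩ := Fin.exists_castSucc_eq.2 h₀
      refine .inr ⟨c, ?_⟩
      rw [hc, ← eq_blockRev_apply_zero (Perm.mul_self_eq_one_iff.1 hτ) h3412 h123 h₀]
  · rintro (⟨σ, ⟨hσ, h3412, h123⟩, rfl⟩ | ⟨c, rfl⟩)
    · exact ⟨frame_mul_self_eq_one_iff.2 hσ, av3412_frame_iff.2 h3412, av123_frame_iff.2 h123⟩
    · exact ⟨blockRev_mul_self _, av3412_blockRev _, av123_blockRev _⟩

theorem card_avInvolutions_add_two (n : ℕ) :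
    #(avInvolutions (n + 2)) = #(avInvolutions n) + (n + 1) := by
  have hblockRev : Function.Injective fun c : Fin (n + 1) => blockRev c.castSucc := fun c c' h =>
    Fin.castSucc_injective _ <| by simpa using congrArg (· 0) h
  have hdisj : Disjoint ((avInvolutions n).map ⟨frame, frame_injective⟩)
      (univ.map ⟨_, hblockRev⟩) := by
    simp only [disjoint_left, mem_map, mem_univ, true_and, Function.Embedding.coeFn_mk,
      not_exists]
    rintro _ ⟨σ, -, rfl⟩ c h
    exact (Fin.castSucc_lt_last c).ne (by simpa using congrArg (· 0) h)
  have : avInvolutions (n + 2) = ((avInvolutions n).map _).disjUnion _ hdisj := by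
    ext τ
    simp [mem_avInvolutions_add_two]
  rw [this, card_disjUnion, card_map, card_map, card_univ, Fintype.card_fin]

theorem card_avInvolutions : ∀ n : ℕ, #(avInvolutions n) = 1 + (n / 2) * ((n + 1) / 2)
  | 0 => by decide
  | 1 => by decide
  | n + 2 => by
    rw [card_avInvolutions_add_two, card_avInvolutions n,
      show (n + 2) / 2 = n / 2 + 1 by omega, show (n + 2 + 1) / 2 = (n + 1) / 2 + 1 by omega]
    have : n / 2 + (n + 1) / 2 = n := by omega
    nlinarith

theorem card_involutions_avoiding_3412_123 (n : ℕ) :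
    Nat.card {τ : Equiv.Perm (Fin n) // τ * τ = 1 ∧ Av3412 τ ∧ Av123 τ} =
      1 + (n / 2) * ((n + 1) / 2) := by
  rw [Nat.card_eq_fintype_card, Fintype.card_subtype]
  exact card_avInvolutions n
end

section
/- For n ≥ 1, the number of involutions of {1,...,n} avoiding both 3412 and 4321 equals 2^{n−1}. -/
/-!
An involution `σ` avoids 3412 and 4321 exactly when every point lying strictly under one of its
arcs `(a, σ a)` is fixed: a moved point under an arc, together with the arc's ends and its own
partner, forms one of the two patterns; conversely, in a pattern `i < j < k < l` with
`σ l < σ i`, the points `j` and `k` lie under an arc through `i` or `l`, so they are fixed, which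
contradicts `σ k < σ j`. Such an involution pairs its moved points consecutively in increasing
order, so it is determined by its support, and every set of even size is a support. Toggling a
fixed element shows that half of the `2 ^ n` subsets have even size.
-/

open Finset Function

namespace Finset

theorem card_even_card_subtype {α : Type*} [Fintype α] [Nonempty α] :
    Fintype.card {s : Finset α // Even #s} = 2 ^ (Fintype.card α - 1) := by
  classical
  obtain ⟨a⟩ := ‹Nonempty α›
  let toggle (s : Finset α) : Finset α := if a ∈ s then s.erase a else insert a s
  have toggle_involutive : Involutive toggle := by
    intro s
    by_cases h : a ∈ s <;> simp [toggle, h]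
  have even_toggle_iff (s : Finset α) : Even #(toggle s) ↔ ¬Even #s := by
    by_cases h : a ∈ s
    · have := card_pos.2 ⟨a, h⟩
      simp [toggle, h, card_erase_of_mem h, Nat.even_sub this]
    · simp only [toggle, if_neg h, card_insert_of_notMem h, Nat.even_add_one]
  have halves : Fintype.card {s : Finset α // Even #s} = Fintype.card {s : Finset α // ¬Even #s} :=
    Fintype.card_congr <| (toggle_involutive.toPerm _).subtypeEquiv fun s => by
      simp [even_toggle_iff]
  have total := Fintype.card_subtype_compl (fun s : Finset α => Even #s)
  have le_total := Fintype.card_subtype_le (fun s : Finset α => Even #s)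
  rw [Fintype.card_finset] at total le_total
  have hpow : 2 ^ Fintype.card α = 2 * 2 ^ (Fintype.card α - 1) := by
    rw [← pow_succ', Nat.sub_add_cancel Fintype.card_pos]
  omega

end Finset

namespace Equiv.Perm

variable {α : Type*}

theorem mul_self_eq_one_iff_involutive_s14 {σ : Perm α} : σ * σ = 1 ↔ Involutive σ := by
  simp [Perm.ext_iff, Involutive]

section LinearOrder

variable [LinearOrder α] {σ τ : Perm α}

/-- Drawing each 2-cycle `{a, σ a}` of an involution as an arc over the line, every point
strictly under an arc is fixed. -/
def FixesArcInteriors (σ : Perm α) : Prop :=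
  ∀ a x, a < σ a → a < x → x < σ a → σ x = x

namespace FixesArcInteriors

theorem apply_eq_of_apply_lt (hσ : Involutive σ) (h : σ.FixesArcInteriors) {b x : α}
    (hbx : σ b < x) (hxb : x < b) : σ x = x :=
  h (σ b) x (by rw [hσ b]; exact hbx.trans hxb) hbx (by rwa [hσ b])

theorem apply_le_of_apply_ne (h : σ.FixesArcInteriors) {a y : α} (ha : a < σ a) (hay : a < y)
    (hy : σ y ≠ y) : σ a ≤ y :=
  not_lt.1 fun hya => hy (h a y ha hay hya)

theorem apply_eq_of_lt_of_lt_of_apply_lt (hσ : Involutive σ) (h : σ.FixesArcInteriors)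
    {x y z : α} (hxz : x < z) (hzy : z < y) (hyx : σ y < σ x) : σ z = z := by
  rcases lt_or_ge x (σ x) with hx | hx
  · rcases lt_or_ge z (σ x) with hz | hz
    · exact h x z hx hxz hz
    · exact h.apply_eq_of_apply_lt hσ (hyx.trans_le hz) hzy
  · exact h.apply_eq_of_apply_lt hσ (hyx.trans_le (hx.trans hxz.le)) hzy

theorem apply_lt_apply_of_apply_lt (hσ : Involutive σ) (h : σ.FixesArcInteriors)
    {i j k l : α} (hij : i < j) (hjk : j < k) (hkl : k < l) (hli : σ l < σ i) : σ j < σ k := by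
  rwa [h.apply_eq_of_lt_of_lt_of_apply_lt hσ hij (hjk.trans hkl) hli,
    h.apply_eq_of_lt_of_lt_of_apply_lt hσ (hij.trans hjk) hkl hli]

theorem eq_of_support_eq [Fintype α] (hσ : Involutive σ) (hτ : Involutive τ)
    (hσ' : σ.FixesArcInteriors) (hτ' : τ.FixesArcInteriors) (h : σ.support = τ.support) :
    σ = τ := by
  have fixed_iff (x : α) : σ x = x ↔ τ x = x := by
    simpa using (Finset.ext_iff.1 h x).not
  ext a
  induction a using WellFoundedLT.induction with
  | _ a ih =>
  -- the partner of `a` is forced: below `a` by the induction hypothesis, above `a` it is the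
  -- least point moved by both
  by_cases hσa : σ a < a
  · exact (hτ (σ a)).symm.trans (congrArg τ ((ih _ hσa).symm.trans (hσ a)))
  by_cases hτa : τ a < a
  · exact (congrArg σ ((ih _ hτa).trans (hτ a))).symm.trans (hσ (τ a))
  rw [not_lt] at hσa hτa
  rcases hσa.eq_or_lt with hfix | hσa
  · rw [← hfix, eq_comm, ← fixed_iff, ← hfix]
  have hτa : a < τ a := hτa.lt_of_ne fun e => hσa.ne ((fixed_iff a).2 e.symm).symm
  refine le_antisymm (hσ'.apply_le_of_apply_ne hσa hτa ?_) (hτ'.apply_le_of_apply_ne hτa hσa ?_)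
  · rw [Ne, fixed_iff, hτ]; exact hτa.ne
  · rw [Ne, ← fixed_iff, hσ]; exact hσa.ne

end FixesArcInteriors

theorem apply_eq_self_of_le {b x : α} (hτb : ∀ y, τ y ≠ y → b < y) (hxb : x ≤ b) : τ x = x :=
  by_contra fun hx => (hxb.trans_lt (hτb x hx)).false

section SwapMul

variable {a b : α}

theorem swap_mul_apply_left (hab : a < b) (hτb : ∀ y, τ y ≠ y → b < y) :
    (swap a b * τ) a = b := by
  rw [mul_apply, apply_eq_self_of_le hτb hab.le, swap_apply_left]

theorem swap_mul_apply_right (hτb : ∀ y, τ y ≠ y → b < y) : (swap a b * τ) b = a := by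
  rw [mul_apply, apply_eq_self_of_le hτb le_rfl, swap_apply_right]

theorem swap_mul_apply_of_ne_of_ne (hab : a < b) (hτb : ∀ y, τ y ≠ y → b < y) {y : α}
    (hya : y ≠ a) (hyb : y ≠ b) :
    (swap a b * τ) y = τ y := by
  rw [mul_apply, swap_apply_of_ne_of_ne]
  · rwa [← apply_eq_self_of_le hτb hab.le, τ.injective.ne_iff]
  · rwa [← apply_eq_self_of_le hτb le_rfl, τ.injective.ne_iff]

theorem involutive_swap_mul (hab : a < b) (hτb : ∀ y, τ y ≠ y → b < y) (hτ : Involutive τ) :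
    Involutive (swap a b * τ) := by
  intro y
  by_cases hya : y = a
  · rw [hya, swap_mul_apply_left hab hτb, swap_mul_apply_right hτb]
  by_cases hyb : y = b
  · rw [hyb, swap_mul_apply_right hτb, swap_mul_apply_left hab hτb]
  have hτya : τ y ≠ a := by rwa [← apply_eq_self_of_le hτb hab.le, τ.injective.ne_iff]
  have hτyb : τ y ≠ b := by rwa [← apply_eq_self_of_le hτb le_rfl, τ.injective.ne_iff]
  rw [swap_mul_apply_of_ne_of_ne hab hτb hya hyb, swap_mul_apply_of_ne_of_ne hab hτb hτya hτyb, hτ]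

theorem fixesArcInteriors_swap_mul (hab : a < b) (hτb : ∀ y, τ y ≠ y → b < y)
    (hτ : τ.FixesArcInteriors) :
    (swap a b * τ).FixesArcInteriors := by
  intro c x hc hcx hxc
  by_cases hca : c = a
  · subst hca
    rw [swap_mul_apply_left hab hτb] at hxc
    rw [swap_mul_apply_of_ne_of_ne hab hτb hcx.ne' hxc.ne, apply_eq_self_of_le hτb hxc.le]
  by_cases hcb : c = b
  · subst hcb
    rw [swap_mul_apply_right hτb] at hc
    exact (lt_asymm hab hc).elim
  rw [swap_mul_apply_of_ne_of_ne hab hτb hca hcb] at hc hxc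
  have hbx : b < x := (hτb c hc.ne').trans hcx
  rw [swap_mul_apply_of_ne_of_ne hab hτb (hab.trans hbx).ne' hbx.ne', hτ c x hc hcx hxc]

theorem support_swap_mul [Fintype α] (hab : a < b) (hτb : ∀ y, τ y ≠ y → b < y) :
    (swap a b * τ).support = insert a (insert b τ.support) := by
  ext y
  by_cases hya : y = a
  · simp [hya, swap_mul_apply_left hab hτb, hab.ne']
  by_cases hyb : y = b
  · simp [hyb, swap_mul_apply_right hτb, hab.ne]
  simp [hya, hyb, swap_mul_apply_of_ne_of_ne hab hτb hya hyb]

end SwapMul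

theorem exists_fixesArcInteriors_support_eq [Fintype α] (s : Finset α) (hs : Even #s) :
    ∃ σ : Perm α, Involutive σ ∧ σ.FixesArcInteriors ∧ σ.support = s := by
  induction s using Finset.strongInduction with
  | H s ih =>
  rcases s.eq_empty_or_nonempty with rfl | hne
  · exact ⟨1, fun _ => rfl, fun a _ ha => (lt_irrefl a ha).elim, support_one⟩
  set a := s.min' hne
  have ha : a ∈ s := min'_mem s hne
  have two_le : 2 ≤ #s := by
    have := card_pos.2 hne
    rcases hs with ⟨k, hk⟩
    omega
  have hne' : (s.erase a).Nonempty := by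
    rw [← card_pos, card_erase_of_mem ha]
    omega
  set b := (s.erase a).min' hne'
  have hb : b ∈ s.erase a := min'_mem _ hne'
  have hts : (s.erase a).erase b ⊂ s := (erase_subset _ _).trans_ssubset (erase_ssubset ha)
  have ht : Even #((s.erase a).erase b) := by
    rw [card_erase_of_mem hb, card_erase_of_mem ha, Nat.sub_sub]
    exact (Nat.even_sub (by omega)).2 (by simp [hs])
  obtain ⟨τ, hτ, hτ', hτs⟩ := ih _ hts ht
  have hab : a < b := s.min'_lt_of_mem_erase_min' hne hb
  have hτb (y : α) (hy : τ y ≠ y) : b < y :=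
    (s.erase a).min'_lt_of_mem_erase_min' hne' (hτs ▸ mem_support.2 hy)
  refine ⟨swap a b * τ, involutive_swap_mul hab hτb hτ, fixesArcInteriors_swap_mul hab hτb hτ', ?_⟩
  rw [support_swap_mul hab hτb, hτs, insert_erase hb, insert_erase ha]

theorem even_card_support [Fintype α] (hσ : Involutive σ) : Even #σ.support :=
  even_iff_two_dvd.2 <| two_dvd_card_support <| by rwa [sq, mul_self_eq_one_iff_involutive_s14]

theorem card_involutive_fixesArcInteriors [Fintype α] :
    Nat.card {σ : Perm α // Involutive σ ∧ σ.FixesArcInteriors} =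
      Nat.card {s : Finset α // Even #s} := by
  refine Nat.card_eq_of_bijective (fun σ => ⟨σ.1.support, even_card_support σ.2.1⟩) ⟨?_, ?_⟩
  · rintro ⟨σ, hσ, hσ'⟩ ⟨τ, hτ, hτ'⟩ h
    exact Subtype.ext (hσ'.eq_of_support_eq hσ hτ hτ' (congrArg Subtype.val h))
  · rintro ⟨s, hs⟩
    obtain ⟨σ, hσ, hσ', rfl⟩ := exists_fixesArcInteriors_support_eq s hs
    exact ⟨⟨σ, hσ, hσ'⟩, rfl⟩

end LinearOrder

end Equiv.Perm

theorem fixesArcInteriors_of_av3412_of_av4321 {n : ℕ} {σ : Equiv.Perm (Fin n)}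
    (hσ : Involutive σ) (h3 : Av3412 σ) (h4 : Av4321 σ) : σ.FixesArcInteriors := by
  intro a x _ hax hxa
  by_contra hx
  have hσxa : σ x ≠ a := fun e => hxa.ne (by rw [← e, hσ])
  have hσxσa : σ x ≠ σ a := fun e => hax.ne' (σ.injective e)
  rcases lt_or_gt_of_ne hσxa with h1 | h1
  · exact h3 ⟨σ x, a, x, σ a, h1, hax, hxa, by simpa only [hσ x, hσ a] using ⟨h1, hax, hxa⟩⟩
  rcases lt_or_gt_of_ne hx with h2 | h2
  · exact h4 ⟨a, σ x, x, σ a, h1, h2, hxa, by simpa only [hσ x, hσ a] using ⟨h1, h2, hxa⟩⟩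
  rcases lt_or_gt_of_ne hσxσa with h5 | h5
  · exact h4 ⟨a, x, σ x, σ a, hax, h2, h5, by simpa only [hσ x, hσ a] using ⟨hax, h2, h5⟩⟩
  · exact h3 ⟨a, x, σ a, σ x, hax, hxa, h5, by simpa only [hσ x, hσ a] using ⟨hax, hxa, h5⟩⟩

theorem involution_av3412_av4321_iff {n : ℕ} {σ : Equiv.Perm (Fin n)} :
    σ * σ = 1 ∧ Av3412 σ ∧ Av4321 σ ↔ Involutive σ ∧ σ.FixesArcInteriors := by
  rw [Equiv.Perm.mul_self_eq_one_iff_involutive_s14]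
  refine ⟨fun ⟨hσ, h3, h4⟩ => ⟨hσ, fixesArcInteriors_of_av3412_of_av4321 hσ h3 h4⟩,
    fun ⟨hσ, h⟩ => ⟨hσ, ?_, ?_⟩⟩
  · rintro ⟨i, j, k, l, hij, hjk, hkl, h1, h2, h3⟩
    exact lt_asymm (h.apply_lt_apply_of_apply_lt hσ hij hjk hkl h2) (h1.trans (h2.trans h3))
  · rintro ⟨i, j, k, l, hij, hjk, hkl, h1, h2, h3⟩
    exact lt_asymm (h.apply_lt_apply_of_apply_lt hσ hij hjk hkl (h1.trans (h2.trans h3))) h2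

theorem card_involutions_avoiding_3412_4321 (n : ℕ) (hn : 1 ≤ n) :
    Nat.card {τ : Equiv.Perm (Fin n) // τ * τ = 1 ∧ Av3412 τ ∧ Av4321 τ} =
      2 ^ (n - 1) := by
  have : Nonempty (Fin n) := ⟨⟨0, hn⟩⟩
  rw [Nat.card_congr (Equiv.subtypeEquivRight fun _ => involution_av3412_av4321_iff),
    Equiv.Perm.card_involutive_fixesArcInteriors, Nat.card_eq_fintype_card,
    Finset.card_even_card_subtype, Fintype.card_fin]
end
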